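/- arXiv:2311.11189 — 7 statements merged into one kernel-verified Lean document; each statement's English description precedes it below -/
import Mathlib

section
/- Let ρ be a full-rank density matrix on ℂ^d and define the incoherent state I_c(ρ) := exp((log ρ)^{diag}) / Tr exp((log ρ)^{diag}), where (log ρ)^{diag} is the diagonal matrix whose diagonal entries coincide with those of log ρ. Then min over incoherent states σ of D(σ‖ρ) equals D(I_c(ρ)‖ρ), where D(σ‖ρ) = Tr σ(log σ − log ρ) is the quantum relative entropy. -/
open Matrix
open scoped Kronecker ComplexOrder

noncomputable section

/-- Functional calculus applied to a Hermitian matrix (junk value `0` otherwise). -/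
noncomputable def hermCFC {n : Type*} [Fintype n] [DecidableEq n]
    (A : Matrix n n ℂ) (f : ℝ → ℝ) : Matrix n n ℂ :=
  if h : A.IsHermitian then h.cfc f else 0

noncomputable def mlog {n : Type*} [Fintype n] [DecidableEq n]
    (A : Matrix n n ℂ) : Matrix n n ℂ := hermCFC A Real.log

noncomputable def mpow {n : Type*} [Fintype n] [DecidableEq n]
    (A : Matrix n n ℂ) (α : ℝ) : Matrix n n ℂ := hermCFC A (fun x => x ^ α)

noncomputable def mexp {n : Type*} [Fintype n] [DecidableEq n]
    (A : Matrix n n ℂ) : Matrix n n ℂ := hermCFC A Real.exp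

/-- A density matrix. -/
def IsDensity {n : Type*} [Fintype n] [DecidableEq n] (ρ : Matrix n n ℂ) : Prop :=
  ρ.PosSemidef ∧ ρ.trace = 1

/-- An incoherent (diagonal) density matrix. -/
def IsIncoherent {n : Type*} [Fintype n] [DecidableEq n] (σ : Matrix n n ℂ) : Prop :=
  IsDensity σ ∧ ∀ i j, i ≠ j → σ i j = 0

/-- Quantum relative entropy `D(σ‖ρ) = Tr σ (log σ - log ρ)`. -/
noncomputable def qRelEntropy {n : Type*} [Fintype n] [DecidableEq n]
    (σ ρ : Matrix n n ℂ) : ℝ := ((σ * (mlog σ - mlog ρ)).trace).re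

/-- `Tr ((ρ^{(1-α)/(2α)} σ ρ^{(1-α)/(2α)})^α)`. -/
noncomputable def sandwichTr {n : Type*} [Fintype n] [DecidableEq n]
    (σ ρ : Matrix n n ℂ) (α : ℝ) : ℝ :=
  ((mpow (mpow ρ ((1 - α)/(2*α)) * σ * mpow ρ ((1 - α)/(2*α))) α).trace).re

/-- Sandwiched Rényi relative entropy of order `α`. -/
noncomputable def renyiRel {n : Type*} [Fintype n] [DecidableEq n]
    (σ ρ : Matrix n n ℂ) (α : ℝ) : ℝ := (α - 1)⁻¹ * Real.log (sandwichTr σ ρ α)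

/-- Separable states on a bipartite system. -/
def SepState {A B : Type*} [Fintype A] [Fintype B] [DecidableEq A] [DecidableEq B]
    (σ : Matrix (A × B) (A × B) ℂ) : Prop :=
  ∃ (k : ℕ) (p : Fin k → ℝ) (ρA : Fin k → Matrix A A ℂ) (ρB : Fin k → Matrix B B ℂ),
    (∀ i, 0 ≤ p i) ∧ (∑ i, p i = 1) ∧ (∀ i, IsDensity (ρA i)) ∧ (∀ i, IsDensity (ρB i)) ∧
    σ = ∑ i, (p i : ℂ) • (ρA i ⊗ₖ ρB i)


/-- `t(ρ) = Tr exp((log ρ)^diag)`. -/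
noncomputable def tVal {n : Type*} [Fintype n] [DecidableEq n] (ρ : Matrix n n ℂ) : ℝ :=
  ∑ i, Real.exp ((mlog ρ i i).re)

/-- The incoherent state `I_c(ρ) = exp((log ρ)^diag) / t(ρ)`. -/
noncomputable def Ic {n : Type*} [Fintype n] [DecidableEq n] (ρ : Matrix n n ℂ) :
    Matrix n n ℂ :=
  Matrix.diagonal (fun i => ((Real.exp ((mlog ρ i i).re) / tVal ρ : ℝ) : ℂ))

open scoped Classical in
/-- Extended-real-valued quantum relative entropy, `⊤` when `supp σ ⊄ supp ρ`. -/
noncomputable def qRelEntropyE {n : Type*} [Fintype n] [DecidableEq n]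
    (σ ρ : Matrix n n ℂ) : EReal :=
  if ∀ v : n → ℂ, ρ *ᵥ v = 0 → σ *ᵥ v = 0 then ((qRelEntropy σ ρ : ℝ) : EReal) else ⊤

/-- `n`-fold tensor power of a matrix. -/
noncomputable def tpow {d : ℕ} (ρ : Matrix (Fin d) (Fin d) ℂ) (n : ℕ) :
    Matrix (Fin n → Fin d) (Fin n → Fin d) ℂ :=
  Matrix.of fun x y => ∏ i, ρ (x i) (y i)

/-- The recursively constructed real δ-net `D_{n,k+1,R}` on the sphere `S_{k+1} ⊂ ℝ^{k+2}`. -/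
noncomputable def netR (n : ℕ) : (k : ℕ) → Set (Fin (k + 2) → ℝ)
  | 0 => {v | ∃ j : Fin n, v = ![Real.cos (2 * Real.pi * (j : ℕ) / n),
            Real.sin (2 * Real.pi * (j : ℕ) / n)]}
  | (k + 1) => {v | ∃ j : Fin n, ∃ w ∈ netR n k,
      v = Fin.snoc (fun i => Real.cos (2 * Real.pi * (j : ℕ) / n) * w i)
            (Real.sin (2 * Real.pi * (j : ℕ) / n))}

/-- Pairing real coordinates into complex ones: `x ∈ ℝ^{2m+3} ↦ (x₀, x₁+x₂i, …) ∈ ℂ^{m+2}`. -/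
noncomputable def toC (m : ℕ) (x : Fin (2 * m + 3) → ℝ) : Fin (m + 2) → ℂ :=
  fun j => if (j : ℕ) = 0 then ((x ⟨0, by omega⟩ : ℝ) : ℂ)
    else ((x ⟨2 * (j : ℕ) - 1, by have := j.isLt; omega⟩ : ℝ) : ℂ) +
      ((x ⟨2 * (j : ℕ), by have := j.isLt; omega⟩ : ℝ) : ℂ) * Complex.I

/-- The complex δ-net `D_{n,m+2} ⊂ ℂ^{m+2}`. -/
noncomputable def netC (n m : ℕ) : Set (Fin (m + 2) → ℂ) := toC m '' netR n (2 * m + 1)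

/-- Functional calculus of a real diagonal matrix is diagonal. -/
lemma hermCFC_diagonal {d : ℕ} (w : Fin d → ℝ) (f : ℝ → ℝ) :
    hermCFC (Matrix.diagonal (fun i => ((w i : ℝ) : ℂ))) f
      = Matrix.diagonal (fun i => ((f (w i) : ℝ) : ℂ)) := by
  classical
  set A : Matrix (Fin d) (Fin d) ℂ := Matrix.diagonal (fun i => ((w i : ℝ) : ℂ)) with hAdef
  have hA : A.IsHermitian := by
    rw [Matrix.IsHermitian, hAdef, Matrix.diagonal_conjTranspose]
    congr 1
    funext i
    simp [Pi.star_def, Complex.conj_ofReal]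
    
  have hsd : IsSelfAdjoint A := hA
  have hspec : spectrum ℝ A ⊆ Set.range w := by
    intro x hx
    have hx' : algebraMap ℝ ℂ x ∈ spectrum ℂ A :=
      (spectrum.algebraMap_mem_iff ℂ).mpr hx
    rw [hAdef, spectrum_diagonal] at hx'
    obtain ⟨i, hi⟩ := hx'
    exact ⟨i, Complex.ofReal_injective hi⟩
  set s : Finset ℝ := Finset.image w Finset.univ with hs
  set P : Polynomial ℝ := Lagrange.interpolate s id f with hP
  have hnode : ∀ x ∈ s, Polynomial.eval x P = f x := by
    intro x hx
    exact Lagrange.eval_interpolate_at_node (v := id) f (Set.injOn_id _) hx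
  rw [hermCFC, dif_pos hA, ← hA.cfc_eq]
  have h1 : cfc f A = cfc P.eval A := by
    refine cfc_congr fun x hx => ?_
    obtain ⟨i, rfl⟩ := hspec hx
    exact (hnode _ (Finset.mem_image_of_mem w (Finset.mem_univ i))).symm
  rw [h1, cfc_polynomial P A hsd]
  have h2 : Polynomial.aeval A P
      = (Matrix.diagonalAlgHom ℝ (α := ℂ)) (Polynomial.aeval (fun i => ((w i : ℝ) : ℂ)) P) := by
    rw [hAdef, ← Polynomial.aeval_algHom_apply]
    rfl
  rw [h2]
  have h3 : (Polynomial.aeval (fun i => ((w i : ℝ) : ℂ)) P)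
      = fun i => ((f (w i) : ℝ) : ℂ) := by
    funext i
    have := Polynomial.aeval_algHom_apply (Pi.evalAlgHom ℝ (fun _ : Fin d => ℂ) i)
      (fun j => ((w j : ℝ) : ℂ)) P
    simp only [Pi.evalAlgHom_apply] at this
    rw [← this]
    have hcoe : ((w i : ℝ) : ℂ) = algebraMap ℝ ℂ (w i) := rfl
    rw [hcoe, Polynomial.aeval_algebraMap_apply_eq_algebraMap_eval,
      hnode _ (Finset.mem_image_of_mem w (Finset.mem_univ i))]
    rfl
  rw [h3]
  rfl

/-- The matrix log of a Hermitian matrix is Hermitian. -/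
lemma mlog_isHermitian {d : ℕ} {ρ : Matrix (Fin d) (Fin d) ℂ} (h : ρ.IsHermitian) :
    (mlog ρ).IsHermitian := by
  have h1 : IsSelfAdjoint (cfc Real.log ρ) := cfc_predicate Real.log ρ
  rw [h.cfc_eq] at h1
  rw [mlog, hermCFC, dif_pos h]
  exact h1

/-- Relative entropy of a diagonal matrix with real entries against `ρ`. -/
lemma qRelEntropy_diagonal {d : ℕ} (q : Fin d → ℝ) (ρ : Matrix (Fin d) (Fin d) ℂ) :
    qRelEntropy (Matrix.diagonal (fun i => ((q i : ℝ) : ℂ))) ρ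
      = ∑ i, q i * (Real.log (q i) - (mlog ρ i i).re) := by
  have hlog : mlog (Matrix.diagonal (fun i => ((q i : ℝ) : ℂ)))
      = Matrix.diagonal (fun i => ((Real.log (q i) : ℝ) : ℂ)) := hermCFC_diagonal q Real.log
  rw [qRelEntropy, hlog]
  rw [Matrix.trace]
  rw [Complex.re_sum]
  refine Finset.sum_congr rfl fun i _ => ?_
  have : (Matrix.diagonal (fun i => ((q i : ℝ) : ℂ)) *
      (Matrix.diagonal (fun i => ((Real.log (q i) : ℝ) : ℂ)) - mlog ρ)).diag i
      = (q i : ℂ) * ((Real.log (q i) : ℂ) - mlog ρ i i) := by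
    simp [Matrix.diag, Matrix.diagonal_mul, Matrix.sub_apply, Matrix.diagonal_apply_eq]
  rw [this]
  simp [Complex.mul_re, Complex.sub_re, Complex.sub_im, mul_sub]

/-- Gibbs' variational principle (finite, classical). -/
lemma gibbs_min {d : ℕ} (ℓ : Fin d → ℝ) (q : Fin d → ℝ) (hq0 : ∀ i, 0 ≤ q i)
    (hq1 : ∑ i, q i = 1) :
    ∑ i, (Real.exp (ℓ i) / (∑ j, Real.exp (ℓ j))) *
        (Real.log (Real.exp (ℓ i) / (∑ j, Real.exp (ℓ j))) - ℓ i)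
      ≤ ∑ i, q i * (Real.log (q i) - ℓ i) := by
  classical
  have hd : Nonempty (Fin d) := by
    by_contra h
    rw [not_nonempty_iff] at h
    rw [Finset.univ_eq_empty, Finset.sum_empty] at hq1
    exact one_ne_zero hq1.symm
  set t : ℝ := ∑ j, Real.exp (ℓ j) with ht
  have htpos : 0 < t := Finset.sum_pos (fun j _ => Real.exp_pos _) Finset.univ_nonempty
  set p : Fin d → ℝ := fun i => Real.exp (ℓ i) / t with hp
  have hppos : ∀ i, 0 < p i := fun i => div_pos (Real.exp_pos _) htpos
  have hp1 : ∑ i, p i = 1 := by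
    rw [hp, ← Finset.sum_div, ← ht, div_self htpos.ne']
  have hlogp : ∀ i, Real.log (p i) = ℓ i - Real.log t := by
    intro i
    rw [hp, Real.log_div (Real.exp_pos _).ne' htpos.ne', Real.log_exp]
  have hLHS : ∑ i, p i * (Real.log (p i) - ℓ i) = -Real.log t := by
    have : ∀ i, p i * (Real.log (p i) - ℓ i) = p i * (-Real.log t) := by
      intro i; rw [hlogp i]; ring_nf
    rw [Finset.sum_congr rfl fun i _ => this i, ← Finset.sum_mul, hp1, one_mul]
  rw [hLHS]
  have key : ∀ i, q i - p i ≤ q i * (Real.log (q i) - ℓ i) + q i * Real.log t := by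
    intro i
    rcases eq_or_lt_of_le (hq0 i) with h0 | h0
    · rw [← h0]
      simp [le_of_lt (hppos i)]
    · have hlq : Real.log (p i) - Real.log (q i) ≤ p i / q i - 1 := by
        rw [← Real.log_div (hppos i).ne' h0.ne']
        exact Real.log_le_sub_one_of_pos (div_pos (hppos i) h0)
      have : q i - p i ≤ q i * (Real.log (q i) - Real.log (p i)) := by
        have := mul_le_mul_of_nonneg_left hlq (le_of_lt h0)
        have heq : q i * (p i / q i - 1) = p i - q i := by
          field_simp
        nlinarith [this, heq]
      calc q i - p i ≤ q i * (Real.log (q i) - Real.log (p i)) := this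
        _ = q i * (Real.log (q i) - ℓ i) + q i * Real.log t := by
            rw [hlogp i]; ring
  have hsum : (0 : ℝ) ≤ ∑ i, (q i * (Real.log (q i) - ℓ i) + q i * Real.log t) := by
    calc (0 : ℝ) = ∑ i, (q i - p i) := by rw [Finset.sum_sub_distrib, hq1, hp1, sub_self]
      _ ≤ _ := Finset.sum_le_sum fun i _ => key i
  have : ∑ i, (q i * (Real.log (q i) - ℓ i) + q i * Real.log t)
      = (∑ i, q i * (Real.log (q i) - ℓ i)) + Real.log t := by
    rw [Finset.sum_add_distrib, ← Finset.sum_mul, hq1, one_mul]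
  linarith [hsum, this ▸ hsum]

/-- For a full-rank density matrix `ρ`, the minimum of `D(σ‖ρ)` over
incoherent states `σ` is attained at `I_c(ρ) = exp((log ρ)^diag)/Tr exp((log ρ)^diag)`. -/
theorem stmt2 {d : ℕ} (ρ : Matrix (Fin d) (Fin d) ℂ) (hρ : ρ.PosDef) (hρ1 : ρ.trace = 1) :
    IsLeast {x : ℝ | ∃ σ : Matrix (Fin d) (Fin d) ℂ, IsIncoherent σ ∧ x = qRelEntropy σ ρ}
      (qRelEntropy (Ic ρ) ρ) := by
  classical
  have hd : Nonempty (Fin d) := by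
    by_contra h
    rw [not_nonempty_iff] at h
    rw [Matrix.trace, Finset.univ_eq_empty, Finset.sum_empty] at hρ1
    exact one_ne_zero hρ1.symm
  set ℓ : Fin d → ℝ := fun i => (mlog ρ i i).re with hℓ
  have htpos : 0 < tVal ρ := by
    rw [tVal]
    exact Finset.sum_pos (fun j _ => Real.exp_pos _) Finset.univ_nonempty
  set p : Fin d → ℝ := fun i => Real.exp (ℓ i) / tVal ρ with hp
  have hppos : ∀ i, 0 < p i := fun i => div_pos (Real.exp_pos _) htpos
  have hp1 : ∑ i, p i = 1 := by
    have h1 : ∑ i, p i = (∑ i, Real.exp (ℓ i)) / tVal ρ := by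
      rw [hp, ← Finset.sum_div]
    rw [h1, show (∑ i, Real.exp (ℓ i)) = tVal ρ from rfl, div_self htpos.ne']
  have hIc : Ic ρ = Matrix.diagonal (fun i => ((p i : ℝ) : ℂ)) := rfl
  constructor
  · refine ⟨Ic ρ, ⟨⟨?_, ?_⟩, ?_⟩, rfl⟩
    · rw [hIc]
      refine Matrix.posSemidef_diagonal_iff.mpr fun i => ?_
      rw [Complex.le_def]
      constructor
      · simpa using (hppos i).le
      · simp
    · rw [hIc, Matrix.trace_diagonal, ← Complex.ofReal_sum, hp1, Complex.ofReal_one]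
    · intro i j hij
      rw [hIc]
      exact Matrix.diagonal_apply_ne _ hij
  · rintro x ⟨σ, ⟨⟨hσpsd, hσtr⟩, hσdiag⟩, rfl⟩
    set q : Fin d → ℝ := fun i => (σ i i).re with hq
    have hdiagpos : ∀ i, 0 ≤ σ i i := by
      intro i
      exact hσpsd.diag_nonneg
    have hq0 : ∀ i, 0 ≤ q i := fun i => (Complex.le_def.mp (hdiagpos i)).1
    have him : ∀ i, (σ i i).im = 0 := fun i => ((Complex.le_def.mp (hdiagpos i)).2).symm
    have hσeq : σ = Matrix.diagonal (fun i => ((q i : ℝ) : ℂ)) := by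
      ext i j
      rcases eq_or_ne i j with rfl | hij
      · rw [Matrix.diagonal_apply_eq]
        exact Complex.ext (by simp [hq]) (by simp [him i])
      · rw [Matrix.diagonal_apply_ne _ hij, hσdiag i j hij]
    have hq1 : ∑ i, q i = 1 := by
      have := congrArg Complex.re hσtr
      rw [Matrix.trace] at this
      simpa [Complex.re_sum, Matrix.diag, hq] using this
    rw [hσeq, qRelEntropy_diagonal q ρ, hIc, qRelEntropy_diagonal p ρ]
    exact gibbs_min ℓ q hq0 hq1

end
end

section
/- For any incoherent state σ and full-rank density matrix ρ on ℂ^d, the identity D(σ‖ρ) = D(σ‖I_c(ρ)) − log t(ρ) holds, where t(ρ) = Tr exp((log ρ)^{diag}) and I_c(ρ) = exp((log ρ)^{diag})/t(ρ). -/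
open Matrix
open scoped Kronecker ComplexOrder

noncomputable section

section MyAux

variable {n : Type*} [Fintype n] [DecidableEq n]

/-- `Matrix.diagonal` as a star algebra hom. -/
noncomputable def diagSAH (n : Type*) [Fintype n] [DecidableEq n] :
    (n → ℂ) →⋆ₐ[ℂ] Matrix n n ℂ where
  toFun := Matrix.diagonal
  map_one' := Matrix.diagonal_one
  map_mul' v w := by simp [Matrix.diagonal_mul_diagonal]
  map_zero' := Matrix.diagonal_zero
  map_add' v w := by simp [Matrix.diagonal_add]
  commutes' r := by simp [Matrix.algebraMap_eq_diagonal]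
  map_star' v := by
    simp only [Matrix.star_eq_conjTranspose, Matrix.diagonal_conjTranspose]

/-- Evaluation as a star algebra hom. -/
noncomputable def evalSAH (n : Type*) [Fintype n] [DecidableEq n] (i : n) :
    (n → ℂ) →⋆ₐ[ℂ] ℂ :=
  { Pi.evalAlgHom ℂ (fun _ => ℂ) i with map_star' := fun _ => rfl }

lemma pi_spectrum_subset (w : n → ℂ) :
    spectrum ℝ w ⊆ Set.range (fun i => (w i).re) := by
  intro x hx
  rw [spectrum.mem_iff] at hx
  by_contra hc
  apply hx
  set f : n → ℂ := algebraMap ℝ (n → ℂ) x - w with hf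
  have hne : ∀ i, f i ≠ 0 := by
    intro i h0
    apply hc
    have h1 : (x : ℂ) = w i := by
      have : (x : ℂ) - w i = 0 := h0
      linear_combination this
    exact ⟨i, by show (w i).re = x; rw [← h1]; simp⟩
  exact IsUnit.of_mul_eq_one (a := f) (fun i => (f i)⁻¹)
    (funext fun i => mul_inv_cancel₀ (hne i))

lemma pi_spectrum_finite (w : n → ℂ) : (spectrum ℝ w).Finite :=
  (Set.finite_range _).subset (pi_spectrum_subset w)

lemma selfadj_pi (v : n → ℝ) : _root_.IsSelfAdjoint (fun i => (v i : ℂ)) := by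
  show star _ = _
  funext i
  simp [Pi.star_apply, Complex.star_def, Complex.conj_ofReal]

lemma selfadj_diag (v : n → ℝ) :
    _root_.IsSelfAdjoint (Matrix.diagonal (fun i => (v i : ℂ))) := by
  show star _ = _
  rw [Matrix.star_eq_conjTranspose, Matrix.diagonal_conjTranspose,
    (selfadj_pi v).star_eq]

instance piCFCReal : ContinuousFunctionalCalculus ℝ (n → ℂ) IsSelfAdjoint :=
  IsSelfAdjoint.instContinuousFunctionalCalculus

lemma cfc_diag (v : n → ℝ) (f : ℝ → ℝ) :
    cfc f (Matrix.diagonal fun i => (v i : ℂ)) = Matrix.diagonal fun i => ((f (v i) : ℝ) : ℂ) := by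
  set w : n → ℂ := fun i => (v i : ℂ) with hw
  have hsa : _root_.IsSelfAdjoint w := selfadj_pi v
  have hfin : (spectrum ℝ w).Finite := pi_spectrum_finite w
  have hcpt : CompactSpace (spectrum ℝ w) := by
    rw [← isCompact_iff_compactSpace]; exact hfin.isCompact
  haveI : Finite (spectrum ℝ w) := hfin.to_subtype
  have hcont : ContinuousOn f (spectrum ℝ w) := by
    rw [continuousOn_iff_continuous_restrict]
    exact continuous_of_discreteTopology
  have hdcont : Continuous (diagSAH n) := by
    show Continuous fun v : n → ℂ => Matrix.diagonal v
    exact continuous_id.matrix_diagonal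
  have h1 : (diagSAH n) (cfc f w) = cfc f ((diagSAH n) w) :=
    StarAlgHom.map_cfc (diagSAH n) f w hcont hdcont hsa (selfadj_diag v)
  have h2 : ∀ i, (cfc f w) i = cfc f (w i) := by
    intro i
    have hsai : _root_.IsSelfAdjoint (w i) := by
      show star _ = _
      simp [hw, Complex.star_def, Complex.conj_ofReal]
    exact StarAlgHom.map_cfc (evalSAH n i) f w hcont (continuous_apply i) hsa hsai
  have h3 : cfc f w = fun i => ((f (v i) : ℝ) : ℂ) := by
    funext i
    rw [h2 i]
    have : w i = algebraMap ℝ ℂ (v i) := rfl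
    rw [this, cfc_algebraMap]
    rfl
  have h4 : (diagSAH n) w = Matrix.diagonal w := rfl
  rw [← h4, ← h1, h3]
  rfl

lemma hermCFC_diag (v : n → ℝ) (f : ℝ → ℝ) :
    hermCFC (Matrix.diagonal fun i => (v i : ℂ)) f
      = Matrix.diagonal fun i => ((f (v i) : ℝ) : ℂ) := by
  have hh : (Matrix.diagonal fun i => (v i : ℂ)).IsHermitian := selfadj_diag v
  rw [hermCFC, dif_pos hh, ← hh.cfc_eq, cfc_diag]

end MyAux

/-- For any incoherent state `σ` and full-rank density matrix `ρ`,
`D(σ‖ρ) = D(σ‖I_c(ρ)) − log t(ρ)` where `t(ρ) = Tr exp((log ρ)^diag)`. -/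
theorem stmt3 {d : ℕ} (ρ σ : Matrix (Fin d) (Fin d) ℂ)
    (hρ : ρ.PosDef) (hρ1 : ρ.trace = 1) (hσ : IsIncoherent σ) :
    qRelEntropy σ ρ = qRelEntropy σ (Ic ρ) - Real.log (tVal ρ) := by
  obtain ⟨⟨hσpsd, hσtr⟩, hσdiag⟩ := hσ
  have hne : Nonempty (Fin d) := by
    by_contra h
    rw [not_nonempty_iff] at h
    rw [Matrix.trace, Finset.univ_eq_empty, Finset.sum_empty] at hρ1
    exact zero_ne_one hρ1
  set x : Fin d → ℝ := fun i => (mlog ρ i i).re with hx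
  have ht : 0 < tVal ρ :=
    Finset.sum_pos (fun i _ => Real.exp_pos _) Finset.univ_nonempty
  have hIc : mlog (Ic ρ) = Matrix.diagonal
      (fun i => ((x i - Real.log (tVal ρ) : ℝ) : ℂ)) := by
    rw [Ic, mlog, hermCFC_diag]
    have hlg : ∀ i : Fin d, Real.log (Real.exp (x i) / tVal ρ)
        = x i - Real.log (tVal ρ) := fun i => by
      rw [Real.log_div (Real.exp_ne_zero _) ht.ne', Real.log_exp]
    exact congrArg Matrix.diagonal (funext fun i => congrArg Complex.ofReal (hlg i))
  have hσim : ∀ i, (σ i i).im = 0 := by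
    intro i
    have h := hσpsd.1
    have h2 : star (σ i i) = σ i i := by
      conv_rhs => rw [← h]
      simp [Matrix.conjTranspose_apply]
    exact Complex.conj_eq_iff_im.mp h2
  have key : ∀ M : Matrix (Fin d) (Fin d) ℂ,
      ((σ * M).trace).re = ∑ i, (σ i i).re * (M i i).re := by
    intro M
    rw [Matrix.trace, Complex.re_sum]
    refine Finset.sum_congr rfl fun i _ => ?_
    rw [Matrix.diag_apply, Matrix.mul_apply, Finset.sum_eq_single i
      (fun j _ hj => by rw [hσdiag i j (Ne.symm hj), zero_mul])
      (fun h => absurd (Finset.mem_univ i) h)]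
    rw [Complex.mul_re, hσim, zero_mul, sub_zero]
  have hsum1 : ∑ i, (σ i i).re = 1 := by
    have h := congrArg Complex.re hσtr
    rw [Matrix.trace, Complex.re_sum] at h
    simpa using h
  have hρtr : ((σ * mlog ρ).trace).re = ∑ i, (σ i i).re * x i := key _
  have hIctr : ((σ * mlog (Ic ρ)).trace).re
      = (∑ i, (σ i i).re * x i) - Real.log (tVal ρ) := by
    rw [key, hIc]
    have hterm : ∀ i : Fin d, (σ i i).re * ((Matrix.diagonal
        (fun i => ((x i - Real.log (tVal ρ) : ℝ) : ℂ)) i i).re)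
        = (σ i i).re * x i - (σ i i).re * Real.log (tVal ρ) := by
      intro i
      rw [Matrix.diagonal_apply_eq]
      simp [mul_sub]
    rw [Finset.sum_congr rfl fun i _ => hterm i, Finset.sum_sub_distrib,
      ← Finset.sum_mul, hsum1, one_mul]
  unfold qRelEntropy
  rw [mul_sub, mul_sub, Matrix.trace_sub, Matrix.trace_sub,
    Complex.sub_re, Complex.sub_re, hρtr, hIctr]
  ring


end
end

section
/- Let Z = Σ_{j=0}^{d−1} ω^j |j⟩⟨j| with ω = e^{2πi/d}, |+⟩ = (1/√d) Σ_j |j⟩, and for a probability distribution p let ρ(p) = Σ_j p_j Z^j |+⟩⟨+| Z^{−j}. Then min over incoherent σ of D(σ‖ρ(p)) = D(p_mix‖p) = −(1/d) Σ_j log p_j − log d, where p_mix is the uniform distribution on {0,...,d−1}. -/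
open Matrix
open scoped Kronecker ComplexOrder

noncomputable section

lemma spectrum_real_diagonal {n : Type*} [Fintype n] [DecidableEq n] (q : n → ℝ) :
    spectrum ℝ (Matrix.diagonal (fun i => (q i : ℂ))) = Set.range q := by
  ext x
  rw [← spectrum.algebraMap_mem_iff ℂ, spectrum_diagonal]
  constructor
  · rintro ⟨i, hi⟩
    exact ⟨i, Complex.ofReal_injective hi⟩
  · rintro ⟨i, rfl⟩
    exact ⟨i, rfl⟩

lemma isHermitian_diagonal_ofReal {n : Type*} [Fintype n] [DecidableEq n] (q : n → ℝ) :
    (Matrix.diagonal (fun i => (q i : ℂ))).IsHermitian := by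
  rw [Matrix.IsHermitian, Matrix.diagonal_conjTranspose]
  congr 1 with i
  simp [Pi.star_def, Complex.conj_ofReal]

/-- `diagonal` composed with functions on spectrum, as a star algebra hom. -/
noncomputable def diagCfcHom {n : Type*} [Fintype n] [DecidableEq n] (q : n → ℝ) :
    C(spectrum ℝ (Matrix.diagonal (fun i => (q i : ℂ))), ℝ) →⋆ₐ[ℝ] Matrix n n ℂ where
  toFun g := Matrix.diagonal (fun i =>
    ((g ⟨q i, by rw [spectrum_real_diagonal]; exact ⟨i, rfl⟩⟩ : ℝ) : ℂ))
  map_one' := by simp [Matrix.diagonal_one]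
  map_mul' f g := by simp [Matrix.diagonal_mul_diagonal]
  map_zero' := by simp
  map_add' f g := by simp [Matrix.diagonal_add]
  commutes' r := by
    rw [Matrix.algebraMap_eq_diagonal]
    congr 1
  map_star' f := by
    simp only [star_eq_conjTranspose, Matrix.diagonal_conjTranspose]
    congr 1 with i
    simp [Pi.star_def, Complex.conj_ofReal]

lemma cfc_diagonal {n : Type*} [Fintype n] [DecidableEq n] (q : n → ℝ) (f : ℝ → ℝ) :
    cfc f (Matrix.diagonal (fun i => (q i : ℂ))) = Matrix.diagonal (fun i => (f (q i) : ℂ)) := by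
  have hD : IsSelfAdjoint (Matrix.diagonal (fun i => (q i : ℂ))) := isHermitian_diagonal_ofReal q
  have hcont : Continuous (diagCfcHom (n := n) q) := by
    simp only [diagCfcHom, StarAlgHom.coe_mk']
    exact Continuous.matrix_diagonal (by fun_prop)
  have h := cfcHom_eq_of_continuous_of_map_id hD (diagCfcHom q) hcont (by
    simp only [diagCfcHom, StarAlgHom.coe_mk']
    rfl)
  rw [cfc_apply f _ hD (by rw [continuousOn_iff_continuous_restrict]; fun_prop), h]
  rfl

/-- Conjugation by a unitary as a star algebra hom. -/
noncomputable def conjSAH {n : Type*} [Fintype n] [DecidableEq n] (U : Matrix n n ℂ)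
    (hU : U ∈ unitary (Matrix n n ℂ)) : Matrix n n ℂ →⋆ₐ[ℂ] Matrix n n ℂ where
  toFun x := U * x * star U
  map_one' := by
    show U * 1 * star U = 1
    rw [mul_one]
    exact (Unitary.mem_iff.mp hU).2
  map_mul' x y := by
    have h : star U * U = 1 := (Unitary.mem_iff.mp hU).1
    show U * (x * y) * star U = U * x * star U * (U * y * star U)
    calc U * (x * y) * star U = U * (x * ((star U * U) * y)) * star U := by rw [h, one_mul]
      _ = U * x * star U * (U * y * star U) := by simp only [mul_assoc]
  map_zero' := by simp
  map_add' x y := by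
    show U * (x + y) * star U = U * x * star U + U * y * star U
    rw [mul_add, add_mul]
  commutes' c := by
    show U * algebraMap ℂ (Matrix n n ℂ) c * star U = algebraMap ℂ (Matrix n n ℂ) c
    simp only [Algebra.algebraMap_eq_smul_one]
    rw [mul_smul_comm, mul_one, smul_mul_assoc, (Unitary.mem_iff.mp hU).2]
  map_star' x := by
    show U * star x * star U = star (U * x * star U)
    simp [Matrix.star_mul, star_star, mul_assoc]

lemma hermCFC_conj {n : Type*} [Fintype n] [DecidableEq n] (U : Matrix n n ℂ)
    (hU : U ∈ unitary (Matrix n n ℂ)) (q : n → ℝ) (f : ℝ → ℝ) :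
    hermCFC (U * Matrix.diagonal (fun i => (q i : ℂ)) * star U) f
      = U * Matrix.diagonal (fun i => (f (q i) : ℂ)) * star U := by
  have hD : IsSelfAdjoint (Matrix.diagonal (fun i => (q i : ℂ))) := isHermitian_diagonal_ofReal q
  have hA : (U * Matrix.diagonal (fun i => (q i : ℂ)) * star U).IsHermitian := by
    rw [Matrix.IsHermitian, ← star_eq_conjTranspose]
    simp [Matrix.star_mul, star_star, mul_assoc, hD.star_eq]
  have hφ : Continuous (conjSAH U hU) := by
    have hc : ⇑(conjSAH U hU) = fun x : Matrix n n ℂ => U * x * star U := rfl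
    rw [hc]
    exact (continuous_const.matrix_mul continuous_id).matrix_mul continuous_const
  have hAsa : IsSelfAdjoint (U * Matrix.diagonal (fun i => (q i : ℂ)) * star U) := hA
  have key : (conjSAH U hU) (cfc f (Matrix.diagonal (fun i => (q i : ℂ))))
      = cfc f ((conjSAH U hU) (Matrix.diagonal (fun i => (q i : ℂ)))) :=
    StarAlgHomClass.map_cfc (conjSAH U hU) f _
      (by rw [continuousOn_iff_continuous_restrict]; fun_prop) hφ hD hAsa
  have hconj : (conjSAH U hU) (Matrix.diagonal (fun i => (q i : ℂ)))
      = U * Matrix.diagonal (fun i => (q i : ℂ)) * star U := rfl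
  rw [hermCFC, dif_pos hA, ← hA.cfc_eq, ← hconj, ← key, cfc_diagonal]
  rfl

lemma hermCFC_diagonal_s4 {n : Type*} [Fintype n] [DecidableEq n] (q : n → ℝ) (f : ℝ → ℝ) :
    hermCFC (Matrix.diagonal (fun i => (q i : ℂ))) f
      = Matrix.diagonal (fun i => (f (q i) : ℂ)) := by
  rw [hermCFC, dif_pos (isHermitian_diagonal_ofReal q), ← Matrix.IsHermitian.cfc_eq, cfc_diagonal]



lemma fourier_orth {d : ℕ} (hd : 0 < d) (j j' : Fin d) :
    ∑ k : Fin d, (starRingEnd ℂ)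
        (Complex.exp (2 * (Real.pi : ℂ) * (j.1 : ℂ) * (k.1 : ℂ) * Complex.I / d) /
          (Real.sqrt d : ℂ)) *
        (Complex.exp (2 * (Real.pi : ℂ) * (j'.1 : ℂ) * (k.1 : ℂ) * Complex.I / d) /
          (Real.sqrt d : ℂ))
      = if j = j' then 1 else 0 := by
  have hdC : ((d : ℂ)) ≠ 0 := Nat.cast_ne_zero.mpr hd.ne'
  set ω : ℂ := Complex.exp (2 * (Real.pi : ℂ) * Complex.I / d) with hω
  have hprim : IsPrimitiveRoot ω d := Complex.isPrimitiveRoot_exp d hd.ne'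
  set m : ℤ := (j'.1 : ℤ) - (j.1 : ℤ) with hm
  have hsq : ((Real.sqrt d : ℂ)) * ((Real.sqrt d : ℂ)) = (d : ℂ) := by
    rw [← Complex.ofReal_mul, Real.mul_self_sqrt (Nat.cast_nonneg d)]; norm_cast
  have hterm : ∀ k : Fin d, (starRingEnd ℂ)
        (Complex.exp (2 * (Real.pi : ℂ) * (j.1 : ℂ) * (k.1 : ℂ) * Complex.I / d) /
          (Real.sqrt d : ℂ)) *
        (Complex.exp (2 * (Real.pi : ℂ) * (j'.1 : ℂ) * (k.1 : ℂ) * Complex.I / d) /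
          (Real.sqrt d : ℂ)) = (ω ^ m) ^ (k.1 : ℕ) / d := by
    intro k
    rw [← zpow_natCast (ω ^ m) k.1, ← _root_.zpow_mul, hω, ← Complex.exp_int_mul]
    rw [map_div₀, ← Complex.exp_conj]
    have hconj : (starRingEnd ℂ) (2 * (Real.pi : ℂ) * (j.1 : ℂ) * (k.1 : ℂ) * Complex.I / d)
        = -(2 * (Real.pi : ℂ) * (j.1 : ℂ) * (k.1 : ℂ) * Complex.I / d) := by
      simp [map_div₀, Complex.conj_ofReal, map_ofNat]
      ring
    rw [hconj, Complex.conj_ofReal, div_mul_div_comm, hsq, ← Complex.exp_add]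
    congr 1
    congr 1
    rw [hm]
    push_cast
    field_simp
    push_cast
    ring
  rw [Finset.sum_congr rfl (fun k _ => hterm k), ← Finset.sum_div]
  by_cases hjj : j = j'
  · subst hjj
    have : m = 0 := by simp [hm]
    rw [this]
    simp [Finset.card_univ, hdC]
  · rw [if_neg hjj]
    have hsum : ∑ k : Fin d, (ω ^ m) ^ (k.1 : ℕ) = 0 := by
      rw [Fin.sum_univ_eq_sum_range (fun k => (ω ^ m) ^ k) d]
      have hz1 : ω ^ m ≠ 1 := by
        rw [Ne, hprim.zpow_eq_one_iff_dvd]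
        intro hdvd
        rw [hm] at hdvd
        have h1 := j.2
        have h2 := j'.2
        have hz : (j'.1 : ℤ) - (j.1 : ℤ) = 0 := by
          refine Int.eq_zero_of_abs_lt_dvd hdvd ?_
          rw [abs_lt]
          omega
        exact hjj (Fin.ext (by omega)).symm
      have hzd : (ω ^ m) ^ d = 1 := by
        rw [← zpow_natCast, ← _root_.zpow_mul, mul_comm, _root_.zpow_mul, zpow_natCast, hprim.pow_eq_one,
          _root_.one_zpow]
      rw [geom_sum_eq hz1, hzd, sub_self, zero_div]
    rw [hsum, zero_div]


lemma sqrtd_mul_self (d : ℕ) : ((Real.sqrt d : ℝ) : ℂ) * ((Real.sqrt d : ℝ) : ℂ) = (d : ℂ) := by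
  rw [← Complex.ofReal_mul, Real.mul_self_sqrt (Nat.cast_nonneg d)]; norm_cast

lemma conj_exponent (d a b : ℕ) :
    (starRingEnd ℂ) (2 * (Real.pi : ℂ) * (a : ℂ) * (b : ℂ) * Complex.I / d)
      = -(2 * (Real.pi : ℂ) * (a : ℂ) * (b : ℂ) * Complex.I / d) := by
  simp [map_div₀, Complex.conj_ofReal, map_ofNat]
  ring

/-- For `ρ(p) = Σ_j p_j Z^j |+⟩⟨+| Z^{−j}` (with `Z^j|+⟩` having entries
`e^{2πi jk/d}/√d`), the minimum over incoherent `σ` of `D(σ‖ρ(p))` equals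
`D(p_mix‖p) = −(1/d) Σ_j log p_j − log d`. -/
theorem stmt4 {d : ℕ} (hd : 0 < d) (p : Fin d → ℝ)
    (hp : ∀ i, 0 < p i) (hp1 : ∑ i, p i = 1)
    (v : Fin d → Fin d → ℂ)
    (hv : ∀ j, v j = fun k => Complex.exp (2 * (Real.pi : ℂ) * (j.1 : ℂ) * (k.1 : ℂ) *
        Complex.I / d) / (Real.sqrt d : ℂ))
    (ρp : Matrix (Fin d) (Fin d) ℂ)
    (hρp : ρp = ∑ j, (p j : ℂ) • Matrix.vecMulVec (v j) (star (v j))) :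
    IsLeast {x : ℝ | ∃ σ : Matrix (Fin d) (Fin d) ℂ, IsIncoherent σ ∧ x = qRelEntropy σ ρp}
      (-(1 / (d : ℝ)) * ∑ j, Real.log (p j) - Real.log d) := by
  have hdC : ((d : ℂ)) ≠ 0 := Nat.cast_ne_zero.mpr hd.ne'
  have hdR : (0 : ℝ) < d := Nat.cast_pos.mpr hd
  set F : Matrix (Fin d) (Fin d) ℂ := Matrix.of (fun k j => v j k) with hF
  -- conjugates of entries
  have hstarF : ∀ j k : Fin d, star (F k j) =
      Complex.exp (-(2 * (Real.pi : ℂ) * (j.1 : ℂ) * (k.1 : ℂ) * Complex.I / d)) /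
        (Real.sqrt d : ℂ) := by
    intro j k
    rw [hF]
    simp only [Matrix.of_apply, hv]
    rw [Complex.star_def, map_div₀, ← Complex.exp_conj, Complex.conj_ofReal, conj_exponent]
  -- F is unitary
  have hUnit : F ∈ unitary (Matrix (Fin d) (Fin d) ℂ) := by
    rw [Unitary.mem_iff]
    have h1 : star F * F = 1 := by
      ext j j'
      rw [Matrix.mul_apply]
      have hterm : ∀ k : Fin d, (star F) j k * F k j' =
          (starRingEnd ℂ) (Complex.exp (2 * (Real.pi : ℂ) * (j.1 : ℂ) * (k.1 : ℂ) *
              Complex.I / d) / (Real.sqrt d : ℂ)) *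
            (Complex.exp (2 * (Real.pi : ℂ) * (j'.1 : ℂ) * (k.1 : ℂ) * Complex.I / d) /
              (Real.sqrt d : ℂ)) := by
        intro k
        rw [Matrix.star_apply, hF]
        simp only [Matrix.of_apply, hv, Complex.star_def]
      rw [Finset.sum_congr rfl (fun k _ => hterm k), fourier_orth hd j j']
      by_cases h : j = j' <;> simp [h, Matrix.one_apply]
    exact ⟨h1, mul_eq_one_comm.mp h1⟩
  -- F k j * star (F k j) = 1/d
  have hFF : ∀ k j : Fin d, F k j * star (F k j) = 1 / (d : ℂ) := by
    intro k j
    rw [hstarF j k, hF]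
    simp only [Matrix.of_apply, hv]
    rw [div_mul_div_comm, ← Complex.exp_add, add_neg_cancel, Complex.exp_zero,
      sqrtd_mul_self]
  -- decomposition of ρp
  have hρp2 : ρp = F * Matrix.diagonal (fun j => ((p j : ℝ) : ℂ)) * star F := by
    rw [hρp]
    ext k l
    rw [Matrix.mul_apply]
    rw [Matrix.sum_apply]
    refine Finset.sum_congr rfl fun j _ => ?_
    rw [Matrix.mul_diagonal, Matrix.smul_apply, Matrix.vecMulVec_apply, Matrix.star_apply]
    have h1 : F k j = v j k := rfl
    have h2 : F l j = v j l := rfl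
    rw [h1, h2, Pi.star_apply, smul_eq_mul]
    ring
  -- log of ρp
  have hlog : mlog ρp = F * Matrix.diagonal (fun j => ((Real.log (p j) : ℝ) : ℂ)) * star F := by
    rw [mlog, hρp2, hermCFC_conj F hUnit (fun j => p j) Real.log]
  -- diagonal of log of ρp
  have hlogdiag : ∀ k, (mlog ρp) k k = ((∑ j, Real.log (p j) : ℝ) : ℂ) / d := by
    intro k
    rw [hlog, Matrix.mul_apply]
    have hterm : ∀ j, (F * Matrix.diagonal fun j => ((Real.log (p j) : ℝ) : ℂ)) k j *
        (star F) j k = ((Real.log (p j) : ℝ) : ℂ) / d := by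
      intro j
      rw [Matrix.mul_diagonal, Matrix.star_apply]
      calc F k j * ((Real.log (p j) : ℝ) : ℂ) * star (F k j)
          = (F k j * star (F k j)) * ((Real.log (p j) : ℝ) : ℂ) := by ring
        _ = ((Real.log (p j) : ℝ) : ℂ) / d := by rw [hFF]; ring
    rw [Finset.sum_congr rfl (fun j _ => hterm j), ← Finset.sum_div]
    push_cast
    rfl
  -- the value of the relative entropy on incoherent states
  have key : ∀ σ : Matrix (Fin d) (Fin d) ℂ, IsIncoherent σ →
      qRelEntropy σ ρp = (∑ k, (σ k k).re * Real.log ((σ k k).re))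
        - (1 / (d : ℝ)) * ∑ j, Real.log (p j) := by
    intro σ hσ
    obtain ⟨⟨hpsd, htr⟩, hoff⟩ := hσ
    have hherm := hpsd.1
    set q : Fin d → ℝ := fun i => (σ i i).re with hqdef
    have hdiagσ : σ = Matrix.diagonal (fun i => ((q i : ℝ) : ℂ)) := by
      ext i j
      by_cases h : i = j
      · subst h
        rw [Matrix.diagonal_apply_eq]
        exact (hherm.coe_re_apply_self i).symm
      · rw [Matrix.diagonal_apply_ne _ h]
        exact hoff i j h
    have hq1 : ∑ k, q k = 1 := by
      have := congrArg Complex.re htr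
      rw [Matrix.trace] at this
      simpa [Complex.re_sum, Matrix.diag] using this
    have hmlogσ : mlog σ = Matrix.diagonal (fun i => ((Real.log (q i) : ℝ) : ℂ)) := by
      rw [mlog, hdiagσ, hermCFC_diagonal_s4]
    have h1 : (σ * mlog σ).trace = ((∑ k, q k * Real.log (q k) : ℝ) : ℂ) := by
      rw [hmlogσ]
      conv_lhs => rw [hdiagσ]
      rw [Matrix.diagonal_mul_diagonal, Matrix.trace_diagonal]
      push_cast
      rfl
    have h2 : (σ * mlog ρp).trace = ((((∑ j, Real.log (p j)) / d) : ℝ) : ℂ) := by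
      rw [Matrix.trace]
      have hterm : ∀ k, (σ * mlog ρp).diag k
          = ((q k : ℝ) : ℂ) * (((∑ j, Real.log (p j) : ℝ) : ℂ) / d) := by
        intro k
        rw [Matrix.diag]
        conv_lhs => rw [hdiagσ]
        rw [Matrix.diagonal_mul, hlogdiag k]
      rw [Finset.sum_congr rfl (fun k _ => hterm k), ← Finset.sum_mul]
      have hone : (∑ k, ((q k : ℝ) : ℂ)) = 1 := by
        push_cast [← Complex.ofReal_sum]
        norm_cast
      rw [hone, one_mul]
      norm_cast
    rw [qRelEntropy, Matrix.mul_sub, Matrix.trace_sub, h1, h2, Complex.sub_re,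
      Complex.ofReal_re, Complex.ofReal_re]
    rw [hqdef]
    ring
  constructor
  · -- membership : the uniform incoherent state achieves the value
    set σ₀ : Matrix (Fin d) (Fin d) ℂ := Matrix.diagonal (fun _ => ((1 / (d : ℝ) : ℝ) : ℂ))
      with hσ₀
    have hinc : IsIncoherent σ₀ := by
      refine ⟨⟨?_, ?_⟩, ?_⟩
      · exact Matrix.posSemidef_diagonal_iff.mpr fun i => by
          rw [Complex.zero_le_real]; positivity
      · rw [hσ₀, Matrix.trace_diagonal, Finset.sum_const, Finset.card_univ, Fintype.card_fin,
          nsmul_eq_mul]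
        push_cast
        field_simp
      · intro i j hij
        rw [hσ₀, Matrix.diagonal_apply_ne _ hij]
    refine ⟨σ₀, hinc, ?_⟩
    rw [key σ₀ hinc]
    have hentry : ∀ k : Fin d, (σ₀ k k).re = 1 / (d : ℝ) := fun k => by
      rw [hσ₀, Matrix.diagonal_apply_eq, Complex.ofReal_re]
    have hsum : ∑ k : Fin d, (σ₀ k k).re * Real.log ((σ₀ k k).re) = -Real.log d := by
      calc ∑ k : Fin d, (σ₀ k k).re * Real.log ((σ₀ k k).re)
          = ∑ _k : Fin d, (1 / (d : ℝ)) * Real.log (1 / (d : ℝ)) :=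
            Finset.sum_congr rfl fun k _ => by rw [hentry k]
        _ = -Real.log d := by
            rw [Finset.sum_const, Finset.card_univ, Fintype.card_fin, one_div, Real.log_inv,
              nsmul_eq_mul]
            field_simp
    rw [hsum]
    ring
  · -- lower bound
    rintro x ⟨σ, hσ, rfl⟩
    rw [key σ hσ]
    have hq0 : ∀ i, 0 ≤ (σ i i).re := by
      intro i
      obtain ⟨⟨hpsd, _⟩, hoff⟩ := hσ
      have hherm := hpsd.1
      have hdiagσ : σ = Matrix.diagonal (fun i => (((σ i i).re : ℝ) : ℂ)) := by
        ext i j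
        by_cases h : i = j
        · subst h
          rw [Matrix.diagonal_apply_eq]
          exact (hherm.coe_re_apply_self i).symm
        · rw [Matrix.diagonal_apply_ne _ h]
          exact hoff i j h
      have := Matrix.posSemidef_diagonal_iff.mp (hdiagσ ▸ hpsd) i
      rwa [Complex.zero_le_real] at this
    have hq1 : ∑ k, (σ k k).re = 1 := by
      have := congrArg Complex.re hσ.1.2
      rw [Matrix.trace] at this
      simpa [Complex.re_sum, Matrix.diag] using this
    have hJ : -Real.log d ≤ ∑ k, (σ k k).re * Real.log ((σ k k).re) := by
      have hj := Real.concaveOn_negMulLog.le_map_sum (t := Finset.univ)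
        (w := fun _ : Fin d => 1 / (d : ℝ)) (p := fun k => (σ k k).re)
        (fun i _ => by positivity)
        (by rw [Finset.sum_const, Finset.card_univ, Fintype.card_fin, nsmul_eq_mul]; field_simp)
        (fun i _ => hq0 i)
      simp only [smul_eq_mul] at hj
      have hx : ∑ i : Fin d, 1 / (d : ℝ) * (σ i i).re = 1 / (d : ℝ) := by
        rw [← Finset.mul_sum, hq1, mul_one]
      rw [hx] at hj
      have hy : Real.negMulLog (1 / (d : ℝ)) = 1 / (d : ℝ) * Real.log d := by
        rw [Real.negMulLog, one_div, Real.log_inv]; ring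
      rw [hy] at hj
      have hz : ∑ i : Fin d, 1 / (d : ℝ) * Real.negMulLog ((σ i i).re)
          = 1 / (d : ℝ) * (-(∑ k : Fin d, (σ k k).re * Real.log ((σ k k).re))) := by
        rw [← Finset.mul_sum]
        congr 1
        rw [← Finset.sum_neg_distrib]
        exact Finset.sum_congr rfl fun i _ => by rw [Real.negMulLog]; ring
      rw [hz] at hj
      have hfin := (mul_le_mul_iff_right₀ (by positivity : (0:ℝ) < 1 / (d : ℝ))).mp hj
      linarith
    linarith [hJ]

end
end

section
/- For α ∈ [1,2] and density matrices σ, ρ on ℂ^d with ρ positive definite, the function σ ↦ exp((α−1) D_α(σ‖ρ)) = Tr((ρ^{(1−α)/(2α)} σ ρ^{(1−α)/(2α)})^α) is convex in σ; consequently, for the X-invariant state ρ(p) = Σ_j p_j Z^j|+⟩⟨+|Z^{−j}, the minimum of D_α(σ‖ρ(p)) over incoherent σ is attained at the completely mixed state and equals D_α(p_mix‖p) = (1/(α−1)) log Σ_j p_j^{1−α} − (α/(α−1)) log d. -/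
open Matrix
open scoped Kronecker ComplexOrder

noncomputable section

section Aux
variable {n : Type*} [Fintype n] [DecidableEq n]

lemma herm_diag (e : n → ℝ) : (diagonal (fun i => (e i : ℂ))).IsHermitian := by
  rw [Matrix.IsHermitian, diagonal_conjTranspose]
  congr 1
  ext i
  simp [Pi.star_def]

lemma herm_conj_diag (U : Matrix n n ℂ) (e : n → ℝ) :
    (U * diagonal (fun i => (e i : ℂ)) * star U).IsHermitian := by
  simpa [Matrix.star_eq_conjTranspose] using
    isHermitian_mul_mul_conjTranspose U (herm_diag e)

lemma diag_conj_unique {U V : Matrix n n ℂ} (hU : U ∈ unitaryGroup n ℂ)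
    (hV : V ∈ unitaryGroup n ℂ) {e μ : n → ℝ}
    (h : U * diagonal (fun i => (e i : ℂ)) * star U
       = V * diagonal (fun i => (μ i : ℂ)) * star V) (f : ℝ → ℝ) :
    U * diagonal (fun i => (f (e i) : ℂ)) * star U
      = V * diagonal (fun i => (f (μ i) : ℂ)) * star V := by
  have hVs : star V * V = 1 := (mem_unitaryGroup_iff'.mp hV)
  have hV2 : V * star V = 1 := (mem_unitaryGroup_iff.mp hV)
  have hUs : star U * U = 1 := (mem_unitaryGroup_iff'.mp hU)
  set W := star V * U with hW
  have hWU : V * W = U := by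
    rw [hW, ← mul_assoc, hV2, one_mul]
  have hcomm : W * diagonal (fun i => (e i : ℂ)) = diagonal (fun i => (μ i : ℂ)) * W := by
    have := congrArg (fun M => star V * M * U) h
    simp only [hW] at this ⊢
    calc star V * U * diagonal (fun i => (e i : ℂ))
        = star V * (U * diagonal (fun i => (e i : ℂ)) * star U) * U := by
          rw [mul_assoc, mul_assoc, mul_assoc, hUs, mul_one, ← mul_assoc]
      _ = star V * (V * diagonal (fun i => (μ i : ℂ)) * star V) * U := by rw [h]
      _ = diagonal (fun i => (μ i : ℂ)) * (star V * U) := by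
          rw [← mul_assoc, ← mul_assoc, hVs, one_mul, mul_assoc]
  have key : ∀ i j, W i j * (f (e j) : ℂ) = (f (μ i) : ℂ) * W i j := by
    intro i j
    have h0 : W i j * (e j : ℂ) = (μ i : ℂ) * W i j := by
      have := congrFun (congrFun (congrArg (fun M => (M : Matrix n n ℂ)) hcomm) i) j
      simpa [Matrix.mul_diagonal, Matrix.diagonal_mul] using this
    by_cases hz : W i j = 0
    · simp [hz]
    · have : (e j : ℂ) = (μ i : ℂ) := by
        have := h0
        rw [mul_comm (μ i : ℂ) (W i j)] at this
        exact mul_left_cancel₀ hz this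
      have he : e j = μ i := by exact_mod_cast this
      rw [he, mul_comm]
  have hcomm2 : W * diagonal (fun i => (f (e i) : ℂ)) = diagonal (fun i => (f (μ i) : ℂ)) * W := by
    ext i j
    simp only [Matrix.mul_diagonal, Matrix.diagonal_mul]
    exact key i j
  calc U * diagonal (fun i => (f (e i) : ℂ)) * star U
      = V * (W * diagonal (fun i => (f (e i) : ℂ)) * star W) * star V := by
        rw [← hWU, StarMul.star_mul]; noncomm_ring
    _ = V * (diagonal (fun i => (f (μ i) : ℂ)) * (W * star W)) * star V := by
        rw [hcomm2]; noncomm_ring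
    _ = V * diagonal (fun i => (f (μ i) : ℂ)) * star V := by
        have : W * star W = 1 := mem_unitaryGroup_iff.mp (mul_mem (Unitary.star_mem hV) hU)
        rw [this, mul_one, mul_assoc]

lemma hermCFC_conj_diag {U : Matrix n n ℂ} (hU : U ∈ unitaryGroup n ℂ)
    {A : Matrix n n ℂ} {e : n → ℝ}
    (hA : A = U * diagonal (fun i => (e i : ℂ)) * star U) (f : ℝ → ℝ) :
    hermCFC A f = U * diagonal (fun i => (f (e i) : ℂ)) * star U := by
  have hH : A.IsHermitian := hA ▸ herm_conj_diag U e
  have hspec : U * diagonal (fun i => (e i : ℂ)) * star U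
      = (hH.eigenvectorUnitary : Matrix n n ℂ)
        * diagonal (fun i => ((hH.eigenvalues i : ℝ) : ℂ))
        * star (hH.eigenvectorUnitary : Matrix n n ℂ) := by
    rw [← hA]
    convert hH.spectral_theorem using 3
    rw [Unitary.conjStarAlgAut_apply]
    rfl
  rw [hermCFC, dif_pos hH, Matrix.IsHermitian.cfc]
  have := diag_conj_unique hU (SetLike.coe_mem hH.eigenvectorUnitary) hspec f
  exact this.symm

lemma trace_conj_diag {U : Matrix n n ℂ} (hU : U ∈ unitaryGroup n ℂ) (g : n → ℂ) :
    (U * diagonal g * star U).trace = ∑ i, g i := by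
  rw [Matrix.trace_mul_cycle, mem_unitaryGroup_iff'.mp hU, one_mul, trace_diagonal]

lemma trace_hermCFC_conj_diag {U : Matrix n n ℂ} (hU : U ∈ unitaryGroup n ℂ)
    {A : Matrix n n ℂ} {e : n → ℝ}
    (hA : A = U * diagonal (fun i => (e i : ℂ)) * star U) (f : ℝ → ℝ) :
    ((hermCFC A f).trace).re = ∑ i, f (e i) := by
  rw [hermCFC_conj_diag hU hA f, trace_conj_diag hU]
  simp


lemma jensen_diag {N : Matrix n n ℂ} (hN : N.PosSemidef) {U : Matrix n n ℂ}
    (hU : U ∈ unitaryGroup n ℂ) {f : ℝ → ℝ} (hf : ConvexOn ℝ (Set.Ici 0) f) :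
    ∑ i, f (((star U * N * U) i i).re) ≤ ∑ j, f (hN.1.eigenvalues j) := by
  classical
  set V := (hN.1.eigenvectorUnitary : Matrix n n ℂ) with hVdef
  set W := star U * V with hWdef
  have hWmem : W ∈ unitaryGroup n ℂ :=
    mul_mem (Unitary.star_mem hU) (SetLike.coe_mem hN.1.eigenvectorUnitary)
  have hWW : W * star W = 1 := mem_unitaryGroup_iff.mp hWmem
  have hWW' : star W * W = 1 := mem_unitaryGroup_iff'.mp hWmem
  set μ := hN.1.eigenvalues with hμ
  have hkey : star U * N * U = W * diagonal (fun j => (μ j : ℂ)) * star W := by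
    conv_lhs => rw [hN.1.spectral_theorem, Unitary.conjStarAlgAut_apply]
    rw [hWdef, StarMul.star_mul, star_star]
    have : diagonal (RCLike.ofReal ∘ hN.1.eigenvalues) = diagonal (fun j => (μ j : ℂ)) := rfl
    rw [this]
    noncomm_ring
  have hentry : ∀ i, ((star U * N * U) i i).re = ∑ j, Complex.normSq (W i j) * μ j := by
    intro i
    rw [hkey]
    have : (W * diagonal (fun j => (μ j : ℂ)) * star W) i i
        = ∑ j, (W i j * (μ j : ℂ)) * (starRingEnd ℂ) (W i j) := by
      rw [Matrix.mul_apply]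
      congr 1; ext j
      rw [Matrix.mul_diagonal]
      simp [Matrix.star_eq_conjTranspose, Matrix.conjTranspose_apply]
    rw [this]
    rw [Complex.re_sum]
    congr 1; ext j
    have : W i j * (μ j : ℂ) * (starRingEnd ℂ) (W i j)
        = ((Complex.normSq (W i j) * μ j : ℝ) : ℂ) := by
      rw [mul_comm (W i j) ((μ j : ℝ) : ℂ), mul_assoc, Complex.mul_conj]
      push_cast
      ring
    rw [this, Complex.ofReal_re]
  have hrow : ∀ i, ∑ j, Complex.normSq (W i j) = 1 := by
    intro i
    have h1 : (W * star W) i i = 1 := by rw [hWW]; simp [Matrix.one_apply]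
    have h2 : (W * star W) i i = ((∑ j, Complex.normSq (W i j) : ℝ) : ℂ) := by
      rw [Matrix.mul_apply]
      push_cast
      congr 1; ext j
      rw [Matrix.star_eq_conjTranspose, Matrix.conjTranspose_apply, Complex.star_def,
        Complex.mul_conj]
    rw [h2] at h1
    exact_mod_cast h1
  have hcol : ∀ j, ∑ i, Complex.normSq (W i j) = 1 := by
    intro j
    have h1 : (star W * W) j j = 1 := by rw [hWW']; simp [Matrix.one_apply]
    have h2 : (star W * W) j j = ((∑ i, Complex.normSq (W i j) : ℝ) : ℂ) := by
      rw [Matrix.mul_apply]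
      push_cast
      congr 1; ext i
      rw [Matrix.star_eq_conjTranspose, Matrix.conjTranspose_apply, mul_comm,
        Complex.star_def, Complex.mul_conj]
    rw [h2] at h1
    exact_mod_cast h1
  have hμ0 : ∀ j, 0 ≤ μ j := fun j => hN.eigenvalues_nonneg j
  calc ∑ i, f (((star U * N * U) i i).re)
      = ∑ i, f (∑ j, Complex.normSq (W i j) * μ j) := by
        congr 1; ext i; rw [hentry]
    _ ≤ ∑ i, ∑ j, Complex.normSq (W i j) * f (μ j) := by
        refine Finset.sum_le_sum fun i _ => ?_
        have := hf.map_sum_le (t := Finset.univ) (w := fun j => Complex.normSq (W i j))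
          (p := μ) (fun j _ => Complex.normSq_nonneg _) (hrow i) (fun j _ => hμ0 j)
        simpa [smul_eq_mul] using this
    _ = ∑ j, (∑ i, Complex.normSq (W i j)) * f (μ j) := by
        rw [Finset.sum_comm]
        simp [Finset.sum_mul]
    _ = ∑ j, f (μ j) := by
        refine Finset.sum_congr rfl fun j _ => ?_
        rw [hcol j, one_mul]


lemma psd_diag_re_nonneg {B : Matrix n n ℂ} (hB : B.PosSemidef) (i : n) :
    0 ≤ (B i i).re := by
  have h := hB.re_dotProduct_nonneg (Pi.single i 1)
  have hstar : star (Pi.single i 1 : n → ℂ) = Pi.single i 1 := by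
    ext x; simp [Pi.single_apply, apply_ite]
  have h1 : (B *ᵥ Pi.single i 1) = fun x => B x i := by
    ext x; simp [Matrix.mulVec, dotProduct, Pi.single_apply, mul_ite, Finset.sum_ite_eq']
  have : dotProduct (star (Pi.single i 1)) (B *ᵥ Pi.single i 1) = B i i := by
    rw [hstar, h1, dotProduct]
    simp [Pi.single_apply, ite_mul, Finset.sum_ite_eq]
  rwa [this] at h

lemma trace_hermCFC_herm {A : Matrix n n ℂ} (hA : A.IsHermitian) (f : ℝ → ℝ) :
    ((hermCFC A f).trace).re = ∑ i, f (hA.eigenvalues i) :=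
  trace_hermCFC_conj_diag (e := hA.eigenvalues) (SetLike.coe_mem hA.eigenvectorUnitary)
    (by conv_lhs => rw [hA.spectral_theorem]
        rfl) f

lemma trace_cfc_convex {ι : Type*} [Fintype ι] (w : ι → ℝ) (hw : ∀ k, 0 ≤ w k)
    (hw1 : ∑ k, w k = 1) (M : ι → Matrix n n ℂ) (hM : ∀ k, (M k).PosSemidef)
    {f : ℝ → ℝ} (hf : ConvexOn ℝ (Set.Ici 0) f) :
    ((hermCFC (∑ k, ((w k : ℝ) : ℂ) • M k) f).trace).re
      ≤ ∑ k, w k * ((hermCFC (M k) f).trace).re := by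
  classical
  set S := ∑ k, ((w k : ℝ) : ℂ) • M k with hS
  have hSH : S.IsHermitian := by
    rw [Matrix.IsHermitian, hS, Matrix.conjTranspose_sum]
    refine Finset.sum_congr rfl fun k _ => ?_
    rw [Matrix.conjTranspose_smul, (hM k).1.eq]
    simp [Complex.star_def, Complex.conj_ofReal]
  set V := (hSH.eigenvectorUnitary : Matrix n n ℂ) with hVdef
  have hVmem : V ∈ unitaryGroup n ℂ := SetLike.coe_mem hSH.eigenvectorUnitary
  have hV1 : star V * V = 1 := mem_unitaryGroup_iff'.mp hVmem
  have hdiagS : star V * S * V = diagonal (fun i => ((hSH.eigenvalues i : ℝ) : ℂ)) := by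
    calc star V * S * V
        = (star V * V) * diagonal (RCLike.ofReal ∘ hSH.eigenvalues) * (star V * V) := by
          conv_lhs => rw [hSH.spectral_theorem, Unitary.conjStarAlgAut_apply]
          noncomm_ring
      _ = diagonal (fun i => ((hSH.eigenvalues i : ℝ) : ℂ)) := by rw [hV1]; simp
  have hsplit : star V * S * V = ∑ k, ((w k : ℝ) : ℂ) • (star V * M k * V) := by
    rw [hS, Finset.mul_sum, Finset.sum_mul]
    refine Finset.sum_congr rfl fun k _ => ?_
    rw [Matrix.mul_smul, Matrix.smul_mul]
  have hPSD : ∀ k, (star V * M k * V).PosSemidef := fun k => by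
    have := (hM k).conjTranspose_mul_mul_same V
    rwa [← Matrix.star_eq_conjTranspose] at this
  have hlam : ∀ i, hSH.eigenvalues i = ∑ k, w k * ((star V * M k * V) i i).re := by
    intro i
    have h2 := congrFun (congrFun (congrArg (fun M : Matrix n n ℂ => M) (hdiagS.symm.trans hsplit)) i) i
    simp only [Matrix.diagonal_apply_eq, Matrix.sum_apply, Matrix.smul_apply,
      smul_eq_mul] at h2
    have := congrArg Complex.re h2
    rw [Complex.ofReal_re, Complex.re_sum] at this
    rw [this]
    refine Finset.sum_congr rfl fun k _ => ?_
    rw [Complex.mul_re]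
    simp
  calc ((hermCFC S f).trace).re
      = ∑ i, f (hSH.eigenvalues i) := trace_hermCFC_herm hSH f
    _ = ∑ i, f (∑ k, w k * ((star V * M k * V) i i).re) := by
        refine Finset.sum_congr rfl fun i _ => ?_; rw [hlam i]
    _ ≤ ∑ i, ∑ k, w k * f (((star V * M k * V) i i).re) := by
        refine Finset.sum_le_sum fun i _ => ?_
        have := hf.map_sum_le (t := Finset.univ) (w := w)
          (p := fun k => ((star V * M k * V) i i).re)
          (fun k _ => hw k) hw1 (fun k _ => psd_diag_re_nonneg (hPSD k) i)
        simpa [smul_eq_mul] using this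
    _ = ∑ k, w k * ∑ i, f (((star V * M k * V) i i).re) := by
        rw [Finset.sum_comm]
        simp [Finset.mul_sum]
    _ ≤ ∑ k, w k * ∑ j, f ((hM k).1.eigenvalues j) := by
        refine Finset.sum_le_sum fun k _ => ?_
        exact mul_le_mul_of_nonneg_left (jensen_diag (hM k) hVmem hf) (hw k)
    _ = ∑ k, w k * ((hermCFC (M k) f).trace).re := by
        refine Finset.sum_congr rfl fun k _ => ?_
        rw [trace_hermCFC_herm (hM k).1 f]

lemma trace_hermCFC_conj {P M : Matrix n n ℂ} (hP : P ∈ unitaryGroup n ℂ)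
    (hM : M.IsHermitian) (f : ℝ → ℝ) :
    ((hermCFC (P * M * star P) f).trace).re = ((hermCFC M f).trace).re := by
  have hU : P * (hM.eigenvectorUnitary : Matrix n n ℂ) ∈ unitaryGroup n ℂ :=
    mul_mem hP (SetLike.coe_mem hM.eigenvectorUnitary)
  have hform : P * M * star P
      = (P * (hM.eigenvectorUnitary : Matrix n n ℂ))
        * diagonal (fun i => ((hM.eigenvalues i : ℝ) : ℂ))
        * star (P * (hM.eigenvectorUnitary : Matrix n n ℂ)) := by
    conv_lhs => rw [hM.spectral_theorem, Unitary.conjStarAlgAut_apply]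
    rw [StarMul.star_mul]
    noncomm_ring
  rw [trace_hermCFC_conj_diag (e := hM.eigenvalues) hU hform f,
    trace_hermCFC_conj_diag (e := hM.eigenvalues) (SetLike.coe_mem hM.eigenvectorUnitary)
      (by conv_lhs => rw [hM.spectral_theorem]
          rfl) f]


end Aux



noncomputable def eph (d : ℕ) (t : ℤ) : ℂ :=
  Complex.exp (2 * Real.pi * Complex.I * t / d)

lemma eph_add (d : ℕ) (s t : ℤ) : eph d (s + t) = eph d s * eph d t := by
  rw [eph, eph, eph, ← Complex.exp_add]
  congr 1
  push_cast
  ring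

lemma eph_zero (d : ℕ) : eph d 0 = 1 := by
  simp [eph]

lemma eph_dvd_one {d : ℕ} (hd : 0 < d) {t : ℤ} (h : (d : ℤ) ∣ t) : eph d t = 1 := by
  obtain ⟨m, rfl⟩ := h
  have hdne : (d : ℂ) ≠ 0 := Nat.cast_ne_zero.mpr hd.ne'
  rw [eph]
  have : 2 * (Real.pi : ℂ) * Complex.I * ((d : ℤ) * m : ℤ) / d = (m : ℂ) * (2 * Real.pi * Complex.I) := by
    push_cast
    field_simp
  rw [this, Complex.exp_int_mul_two_pi_mul_I]

lemma eph_congr {d : ℕ} (hd : 0 < d) {s t : ℤ} (h : (d : ℤ) ∣ (s - t)) :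
    eph d s = eph d t := by
  have : s = t + (s - t) := by ring
  rw [this, eph_add, eph_dvd_one hd h, mul_one]

lemma eph_conj (d : ℕ) (t : ℤ) : (starRingEnd ℂ) (eph d t) = eph d (-t) := by
  rw [eph, eph, ← Complex.exp_conj]
  congr 1
  simp [map_div₀, Complex.conj_ofReal, map_ofNat]

lemma eph_ne_one {d : ℕ} (hd : 0 < d) {t : ℤ} (h : ¬ (d : ℤ) ∣ t) : eph d t ≠ 1 := by
  intro hc
  rw [eph, Complex.exp_eq_one_iff] at hc
  obtain ⟨m, hm⟩ := hc
  have hdne : (d : ℂ) ≠ 0 := Nat.cast_ne_zero.mpr hd.ne'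
  have h2 : (2 * (Real.pi : ℂ) * Complex.I) ≠ 0 := by
    simp [Real.pi_ne_zero, Complex.I_ne_zero]
  apply h
  refine ⟨m, ?_⟩
  have h3 : (2 * (Real.pi : ℂ) * Complex.I) * ((t : ℂ) / d)
      = (2 * (Real.pi : ℂ) * Complex.I) * m := by
    rw [mul_div_assoc] at hm
    rw [hm]; ring
  have h4 : (t : ℂ) / d = m := mul_left_cancel₀ h2 h3
  rw [div_eq_iff hdne] at h4
  have : (t : ℂ) = (d : ℂ) * m := by rw [h4]; ring
  exact_mod_cast this

lemma eph_pow (d : ℕ) (t : ℤ) (k : ℕ) : eph d (t * k) = (eph d t) ^ k := by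
  induction k with
  | zero => simp [eph_zero]
  | succ k ih =>
    have : t * ((k : ℤ) + 1) = t * k + t := by ring
    push_cast
    rw [this, eph_add, ih, pow_succ]

lemma sum_eph {d : ℕ} (hd : 0 < d) {t : ℤ} (h : ¬ (d : ℤ) ∣ t) :
    ∑ k ∈ Finset.range d, eph d (t * k) = 0 := by
  have hx : eph d t ≠ 1 := eph_ne_one hd h
  have : ∑ k ∈ Finset.range d, eph d (t * k) = ∑ k ∈ Finset.range d, (eph d t) ^ k := by
    refine Finset.sum_congr rfl fun k _ => eph_pow d t k
  rw [this, geom_sum_eq hx]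
  have : eph d t ^ d = 1 := by
    rw [← eph_pow, mul_comm]
    exact eph_dvd_one hd ⟨t, by push_cast; ring⟩
  rw [this]
  simp

noncomputable def Fmat (d : ℕ) : Matrix (Fin d) (Fin d) ℂ :=
  Matrix.of fun k j => eph d ((j : ℤ) * (k : ℤ)) / (Real.sqrt d : ℂ)

noncomputable def Pmat (d : ℕ) (m : Fin d) : Matrix (Fin d) (Fin d) ℂ :=
  Matrix.of fun k l => if l = k + m then (1 : ℂ) else 0

lemma sqrt_mul_self_d {d : ℕ} : ((Real.sqrt d : ℝ) : ℂ) * ((Real.sqrt d : ℝ) : ℂ) = (d : ℂ) := by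
  rw [← Complex.ofReal_mul, Real.mul_self_sqrt (Nat.cast_nonneg d)]
  simp

lemma Fmat_unitary {d : ℕ} (hd : 0 < d) : Fmat d ∈ unitaryGroup (Fin d) ℂ := by
  rw [mem_unitaryGroup_iff']
  ext j j'
  rw [Matrix.mul_apply, Matrix.one_apply]
  have hterm : ∀ k : Fin d, (star (Fmat d)) j k * (Fmat d) k j'
      = eph d (((j' : ℤ) - (j : ℤ)) * (k : ℤ)) / d := by
    intro k
    rw [Matrix.star_eq_conjTranspose, Matrix.conjTranspose_apply, Fmat]
    simp only [Matrix.of_apply, Complex.star_def]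
    rw [map_div₀, eph_conj, Complex.conj_ofReal]
    rw [div_mul_div_comm, sqrt_mul_self_d, ← eph_add]
    congr 2
    ring
  rw [Finset.sum_congr rfl fun k _ => hterm k]
  rw [← Finset.sum_div]
  have hrange : ∑ k : Fin d, eph d (((j' : ℤ) - (j : ℤ)) * (k : ℤ))
      = ∑ k ∈ Finset.range d, eph d (((j' : ℤ) - (j : ℤ)) * (k : ℤ)) := by
    rw [Finset.sum_range fun k => eph d (((j' : ℤ) - (j : ℤ)) * (k : ℤ))]
  by_cases h : j = j'
  · subst h
    simp only [sub_self, zero_mul, eph_zero, if_pos rfl, ↓reduceIte]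
    rw [Finset.sum_const, Finset.card_univ, Fintype.card_fin]
    rw [nsmul_eq_mul]
    field_simp
  · rw [if_neg h]
    rw [hrange, sum_eph hd ?_, zero_div]
    intro hdvd
    have h1 : ((j' : ℤ) - (j : ℤ)) = 0 := by
      refine Int.eq_zero_of_abs_lt_dvd hdvd ?_
      have := j.isLt; have := j'.isLt
      rw [abs_lt]
      omega
    apply h
    have : (j : ℤ) = (j' : ℤ) := by omega
    exact Fin.ext (by exact_mod_cast this)

lemma Pmat_mul_Fmat {d : ℕ} (hd : 0 < d) (m : Fin d) :
    Pmat d m * Fmat d = Fmat d * diagonal (fun j : Fin d => eph d ((j : ℤ) * (m : ℤ))) := by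
  ext k j
  rw [Matrix.mul_apply, Matrix.mul_diagonal]
  rw [Finset.sum_eq_single (k + m) (fun l _ hl => by
    rw [Pmat]; simp only [Matrix.of_apply]; rw [if_neg hl, zero_mul])
    (fun h => absurd (Finset.mem_univ _) h)]
  have hP1 : Pmat d m k (k + m) = 1 := by simp [Pmat]
  rw [hP1, one_mul, Fmat]
  simp only [Matrix.of_apply]
  rw [div_mul_eq_mul_div, ← eph_add]
  congr 1
  apply eph_congr hd
  have hval : ((k + m : Fin d) : ℤ) = (((k : ℕ) + (m : ℕ)) % d : ℕ) := by
    rw [Fin.add_def]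
  have hdvd : (d : ℤ) ∣ ((k + m : Fin d) : ℤ) - ((k : ℤ) + (m : ℤ)) := by
    rw [hval]
    push_cast
    rw [Int.emod_def]
    exact ⟨-(((k : ℤ) + (m : ℤ)) / d), by ring⟩
  obtain ⟨c, hc⟩ := hdvd
  exact ⟨(j : ℤ) * c, by linear_combination (j : ℤ) * hc⟩

lemma Ediag_unitary {d : ℕ} (m : Fin d) :
    diagonal (fun j : Fin d => eph d ((j : ℤ) * (m : ℤ))) ∈ unitaryGroup (Fin d) ℂ := by
  rw [mem_unitaryGroup_iff']
  rw [Matrix.star_eq_conjTranspose, Matrix.diagonal_conjTranspose, Matrix.diagonal_mul_diagonal]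
  ext i j
  rw [Matrix.diagonal_apply, Matrix.one_apply]
  split_ifs with h
  · simp only [Pi.star_apply, Complex.star_def]
    rw [eph_conj, ← eph_add]
    simp [eph_zero]
  · rfl

lemma Pmat_eq {d : ℕ} (hd : 0 < d) (m : Fin d) :
    Pmat d m = Fmat d * diagonal (fun j : Fin d => eph d ((j : ℤ) * (m : ℤ))) * star (Fmat d) := by
  have h1 : Fmat d * star (Fmat d) = 1 := mem_unitaryGroup_iff.mp (Fmat_unitary hd)
  calc Pmat d m = Pmat d m * (Fmat d * star (Fmat d)) := by rw [h1, mul_one]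
    _ = (Pmat d m * Fmat d) * star (Fmat d) := by rw [mul_assoc]
    _ = _ := by rw [Pmat_mul_Fmat hd m]

lemma Pmat_unitary {d : ℕ} (hd : 0 < d) (m : Fin d) : Pmat d m ∈ unitaryGroup (Fin d) ℂ := by
  rw [Pmat_eq hd m]
  exact mul_mem (mul_mem (Fmat_unitary hd) (Ediag_unitary m)) (Unitary.star_mem (Fmat_unitary hd))

lemma Pmat_conj_diag {d : ℕ} (m : Fin d) (q : Fin d → ℂ) :
    Pmat d m * diagonal q * star (Pmat d m) = diagonal (fun k => q (k + m)) := by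
  ext k l
  rw [Matrix.mul_apply]
  have hterm : ∀ x : Fin d, (Pmat d m * diagonal q) k x * (star (Pmat d m)) x l
      = (if x = k + m then q x else 0) * (if x = l + m then 1 else 0) := by
    intro x
    rw [Matrix.mul_diagonal, Matrix.star_eq_conjTranspose, Matrix.conjTranspose_apply, Pmat]
    simp only [Matrix.of_apply]
    rw [ite_mul, one_mul, zero_mul]
    split_ifs <;> simp
  rw [Finset.sum_congr rfl fun x _ => hterm x]
  by_cases h : k = l
  · subst h
    rw [Matrix.diagonal_apply_eq]
    rw [Finset.sum_eq_single (k + m) (fun x _ hx => by rw [if_neg hx, zero_mul])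
      (fun h => absurd (Finset.mem_univ _) h)]
    simp
  · rw [Matrix.diagonal_apply_ne _ h]
    apply Finset.sum_eq_zero
    intro x _
    by_cases h1 : x = k + m
    · have h2 : x ≠ l + m := by
        intro hc; apply h
        have := h1 ▸ hc
        exact add_right_cancel this.symm ▸ rfl
      rw [if_neg h2, mul_zero]
    · rw [if_neg h1, zero_mul]

lemma conj_mul_conj {n : Type*} [Fintype n] [DecidableEq n] {U : Matrix n n ℂ}
    (hU : U ∈ unitaryGroup n ℂ) (X Y : Matrix n n ℂ) :
    (U * X * star U) * (U * Y * star U) = U * (X * Y) * star U := by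
  have h1 : star U * U = 1 := mem_unitaryGroup_iff'.mp hU
  calc (U * X * star U) * (U * Y * star U)
      = U * X * (star U * U) * Y * star U := by noncomm_ring
    _ = U * (X * Y) * star U := by rw [h1]; noncomm_ring


lemma hermCFC_isHermitian {n : Type*} [Fintype n] [DecidableEq n]
    (A : Matrix n n ℂ) (f : ℝ → ℝ) : (hermCFC A f).IsHermitian := by
  rw [hermCFC]
  split
  · next h =>
    unfold Matrix.IsHermitian.cfc
    exact herm_conj_diag _ (f ∘ h.eigenvalues)
  · exact isHermitian_zero

/-- For `α ∈ [1,2]`, `σ ↦ exp((α−1)D_α(σ‖ρ)) = Tr((ρ^{(1−α)/(2α)}σρ^{(1−α)/(2α)})^α)`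
is convex in `σ`; consequently for the `X`-invariant state `ρ(p)` the minimum of `D_α(σ‖ρ(p))`
over incoherent `σ` is attained at the completely mixed state and equals
`(1/(α−1)) log Σ_j p_j^{1−α} − (α/(α−1)) log d`. -/
theorem stmt5 {d : ℕ} (hd : 0 < d) (α : ℝ) (hα : α ∈ Set.Icc (1 : ℝ) 2)
    (p : Fin d → ℝ) (hp : ∀ i, 0 < p i) (hp1 : ∑ i, p i = 1)
    (v : Fin d → Fin d → ℂ)
    (hv : ∀ j, v j = fun k => Complex.exp (2 * (Real.pi : ℂ) * (j.1 : ℂ) * (k.1 : ℂ) *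
        Complex.I / d) / (Real.sqrt d : ℂ))
    (ρp : Matrix (Fin d) (Fin d) ℂ)
    (hρp : ρp = ∑ j, (p j : ℂ) • Matrix.vecMulVec (v j) (star (v j))) :
    (∀ ρ : Matrix (Fin d) (Fin d) ℂ, ρ.PosDef → ρ.trace = 1 →
      ∀ σ₁ σ₂ : Matrix (Fin d) (Fin d) ℂ, IsDensity σ₁ → IsDensity σ₂ →
      ∀ t : ℝ, 0 ≤ t → t ≤ 1 →
        sandwichTr ((t : ℂ) • σ₁ + ((1 - t : ℝ) : ℂ) • σ₂) ρ α ≤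
          t * sandwichTr σ₁ ρ α + (1 - t) * sandwichTr σ₂ ρ α) ∧
    IsLeast {x : ℝ | ∃ σ : Matrix (Fin d) (Fin d) ℂ, IsIncoherent σ ∧ x = renyiRel σ ρp α}
      ((α - 1)⁻¹ * Real.log (∑ j, p j ^ (1 - α)) - α / (α - 1) * Real.log d) ∧
    renyiRel (((d : ℝ) : ℂ)⁻¹ • (1 : Matrix (Fin d) (Fin d) ℂ)) ρp α =
      (α - 1)⁻¹ * Real.log (∑ j, p j ^ (1 - α)) - α / (α - 1) * Real.log d := by
  obtain ⟨hα1, hα2⟩ := hα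
  have hαpos : (0:ℝ) < α := lt_of_lt_of_le one_pos hα1
  have hf : ConvexOn ℝ (Set.Ici 0) fun x : ℝ => x ^ α := convexOn_rpow hα1
  have hd0 : (0:ℝ) < (d:ℝ) := by exact_mod_cast hd
  -- PART 1 : convexity
  have part1 : ∀ ρ : Matrix (Fin d) (Fin d) ℂ, ρ.PosDef → ρ.trace = 1 →
      ∀ σ₁ σ₂ : Matrix (Fin d) (Fin d) ℂ, IsDensity σ₁ → IsDensity σ₂ →
      ∀ t : ℝ, 0 ≤ t → t ≤ 1 →
        sandwichTr ((t : ℂ) • σ₁ + ((1 - t : ℝ) : ℂ) • σ₂) ρ α ≤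
          t * sandwichTr σ₁ ρ α + (1 - t) * sandwichTr σ₂ ρ α := by
    intro ρ hρ hρtr σ₁ σ₂ h1 h2 t ht0 ht1
    set A := hermCFC ρ (fun x : ℝ => x ^ ((1 - α)/(2*α))) with hAdef
    have hsand : ∀ σ : Matrix (Fin d) (Fin d) ℂ,
        sandwichTr σ ρ α = ((hermCFC (A * σ * A) (fun x : ℝ => x ^ α)).trace).re := fun σ => rfl
    have hAH : A.IsHermitian := hermCFC_isHermitian ρ _
    have hpsd : ∀ σ : Matrix (Fin d) (Fin d) ℂ, σ.PosSemidef → (A * σ * A).PosSemidef := by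
      intro σ hσ
      have := hσ.conjTranspose_mul_mul_same A
      rwa [hAH.eq] at this
    have hcomb : A * ((t : ℂ) • σ₁ + ((1 - t : ℝ) : ℂ) • σ₂) * A
        = ∑ k : Fin 2, ((![t, 1-t] k : ℝ) : ℂ) • (![A * σ₁ * A, A * σ₂ * A] k) := by
      rw [Fin.sum_univ_two]
      simp only [Matrix.cons_val_zero, Matrix.cons_val_one, Matrix.head_cons]
      rw [mul_add, add_mul, mul_smul_comm, mul_smul_comm, smul_mul_assoc, smul_mul_assoc]
    have key := trace_cfc_convex (w := ![t, 1-t])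
      (fun k => by fin_cases k <;> simp [ht0, ht1] <;> linarith)
      (by rw [Fin.sum_univ_two]; simp)
      ![A * σ₁ * A, A * σ₂ * A]
      (fun k => by fin_cases k
                   · exact hpsd _ h1.1
                   · exact hpsd _ h2.1) hf
    rw [hsand, hsand, hsand, hcomb]
    simp only [Fin.sum_univ_two, Matrix.cons_val_zero, Matrix.cons_val_one, Matrix.head_cons,
      Complex.ofReal_sub, Complex.ofReal_one] at key ⊢
    exact key
  -- Fourier setup
  have hFu := Fmat_unitary hd
  have hdC : ((d : ℝ) : ℂ) ≠ 0 := by exact_mod_cast hd0.ne'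
  have hvF : ∀ (j k : Fin d), v j k = Fmat d k j := by
    intro j k
    rw [hv]
    show Complex.exp (2 * (Real.pi : ℂ) * (j.1 : ℂ) * (k.1 : ℂ) * Complex.I / d)
        / (Real.sqrt d : ℂ) = Fmat d k j
    rw [Fmat]
    simp only [Matrix.of_apply]
    rw [eph]
    congr 2
    push_cast
    ring
  have hρpF : ρp = Fmat d * diagonal (fun j => ((p j : ℝ) : ℂ)) * star (Fmat d) := by
    rw [hρp]
    ext k l
    rw [Matrix.sum_apply, Matrix.mul_apply]
    refine Finset.sum_congr rfl fun j _ => ?_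
    rw [Matrix.smul_apply, Matrix.vecMulVec_apply, Matrix.mul_diagonal,
      Matrix.star_eq_conjTranspose, Matrix.conjTranspose_apply]
    simp only [Pi.star_apply]
    rw [hvF j k, hvF j l]
    simp only [smul_eq_mul]
    ring
  set Aρ := hermCFC ρp (fun x : ℝ => x ^ ((1 - α)/(2*α))) with hAρdef
  have hsandρ : ∀ σ : Matrix (Fin d) (Fin d) ℂ,
      sandwichTr σ ρp α = ((hermCFC (Aρ * σ * Aρ) (fun x : ℝ => x ^ α)).trace).re :=
    fun _ => rfl
  have hAeq : Aρ = Fmat d * diagonal (fun j => ((p j ^ ((1 - α)/(2*α)) : ℝ) : ℂ))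
      * star (Fmat d) := hermCFC_conj_diag hFu hρpF _
  have hAρH : Aρ.IsHermitian := hermCFC_isHermitian _ _
  have hpsdρ : ∀ σ : Matrix (Fin d) (Fin d) ℂ, σ.PosSemidef → (Aρ * σ * Aρ).PosSemidef := by
    intro σ hσ
    have := hσ.conjTranspose_mul_mul_same Aρ
    rwa [hAρH.eq] at this
  set σmix : Matrix (Fin d) (Fin d) ℂ := ((d : ℝ) : ℂ)⁻¹ • 1 with hσmix
  have hmix_diag : σmix = diagonal (fun _ : Fin d => (((d : ℝ)⁻¹ : ℝ) : ℂ)) := by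
    rw [hσmix]
    ext i j
    by_cases h : i = j
    · subst h
      rw [Matrix.smul_apply, Matrix.one_apply_eq, Matrix.diagonal_apply_eq]
      simp [Complex.ofReal_inv]
    · rw [Matrix.smul_apply, Matrix.one_apply_ne h, Matrix.diagonal_apply_ne _ h, smul_zero]
  have hmixF : σmix = Fmat d * diagonal (fun _ : Fin d => (((d : ℝ)⁻¹ : ℝ) : ℂ))
      * star (Fmat d) := by
    have h1 : diagonal (fun _ : Fin d => (((d : ℝ)⁻¹ : ℝ) : ℂ))
        = (((d : ℝ)⁻¹ : ℝ) : ℂ) • (1 : Matrix (Fin d) (Fin d) ℂ) := by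
      ext i j
      by_cases h : i = j
      · subst h
        rw [Matrix.smul_apply, Matrix.one_apply_eq, Matrix.diagonal_apply_eq, smul_eq_mul,
          mul_one]
      · rw [Matrix.smul_apply, Matrix.one_apply_ne h, Matrix.diagonal_apply_ne _ h, smul_zero]
    rw [h1, Matrix.mul_smul, Matrix.smul_mul, mul_one, mem_unitaryGroup_iff.mp hFu,
      hmix_diag, h1]
  have hAmix : Aρ * σmix * Aρ = Fmat d * diagonal (fun j =>
      (((d : ℝ)⁻¹ * (p j ^ ((1 - α)/(2*α)) * p j ^ ((1 - α)/(2*α))) : ℝ) : ℂ))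
      * star (Fmat d) := by
    rw [hAeq, hmixF, conj_mul_conj hFu, conj_mul_conj hFu, diagonal_mul_diagonal,
      diagonal_mul_diagonal]
    have hcom : (fun i : Fin d => ((p i ^ ((1 - α)/(2*α)) : ℝ) : ℂ)
          * (((d : ℝ)⁻¹ : ℝ) : ℂ) * ((p i ^ ((1 - α)/(2*α)) : ℝ) : ℂ))
        = fun i : Fin d =>
          (((d : ℝ)⁻¹ * (p i ^ ((1 - α)/(2*α)) * p i ^ ((1 - α)/(2*α))) : ℝ) : ℂ) := by
      funext i
      rw [Complex.ofReal_mul, Complex.ofReal_mul]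
      ring
    rw [hcom]
  have hval : ∀ j : Fin d, ((d : ℝ)⁻¹ * (p j ^ ((1 - α)/(2*α)) * p j ^ ((1 - α)/(2*α)))) ^ α
      = p j ^ (1 - α) / (d : ℝ) ^ α := by
    intro j
    have hpj := (hp j).le
    have h2c : p j ^ ((1 - α)/(2*α)) * p j ^ ((1 - α)/(2*α)) = p j ^ ((1 - α)/α) := by
      rw [← Real.rpow_add (hp j)]
      congr 1
      field_simp
      ring
    have hcα : (1 - α)/α * α = 1 - α := by field_simp
    rw [h2c, Real.mul_rpow (inv_nonneg.mpr hd0.le) (Real.rpow_nonneg hpj _),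
      Real.inv_rpow hd0.le, ← Real.rpow_mul hpj, hcα]
    rw [div_eq_mul_inv, mul_comm]
  have hTmix : sandwichTr σmix ρp α = (∑ j, p j ^ (1 - α)) / (d : ℝ) ^ α := by
    rw [hsandρ, trace_hermCFC_conj_diag hFu hAmix]
    rw [Finset.sum_congr rfl fun j _ => hval j, ← Finset.sum_div]
  have hNe : Nonempty (Fin d) := ⟨⟨0, hd⟩⟩
  haveI : NeZero d := ⟨hd.ne'⟩
  have hSpos : 0 < ∑ j, p j ^ (1 - α) :=
    Finset.sum_pos (fun j _ => Real.rpow_pos_of_pos (hp j) _) Finset.univ_nonempty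
  have hdα : 0 < (d : ℝ) ^ α := Real.rpow_pos_of_pos hd0 _
  have hTmixpos : 0 < sandwichTr σmix ρp α := by
    rw [hTmix]; exact div_pos hSpos hdα
  have part3 : renyiRel σmix ρp α
      = (α - 1)⁻¹ * Real.log (∑ j, p j ^ (1 - α)) - α / (α - 1) * Real.log d := by
    by_cases hone : α = 1
    · subst hone; simp [renyiRel]
    · have hne : α - 1 ≠ 0 := sub_ne_zero.mpr hone
      rw [renyiRel, hTmix, Real.log_div hSpos.ne' hdα.ne', Real.log_rpow hd0, mul_sub]
      congr 1
      rw [div_eq_mul_inv]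
      ring
  have hmixinc : IsIncoherent σmix := by
    refine ⟨⟨?_, ?_⟩, ?_⟩
    · rw [hmix_diag]
      refine posSemidef_diagonal_iff.mpr fun i => ?_
      rw [Complex.zero_le_real]
      positivity
    · rw [hσmix, Matrix.trace_smul, Matrix.trace_one]
      rw [smul_eq_mul, Fintype.card_fin]
      field_simp
      norm_cast
    · intro i j hij
      rw [hmix_diag, Matrix.diagonal_apply_ne _ hij]
  have lower : ∀ σ : Matrix (Fin d) (Fin d) ℂ, IsIncoherent σ →
      sandwichTr σmix ρp α ≤ sandwichTr σ ρp α := by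
    rintro σ ⟨⟨hσpsd, hσtr⟩, hσoff⟩
    set qc : Fin d → ℂ := fun k => σ k k with hqc
    have hσdiag : σ = diagonal qc := by
      ext i j
      by_cases h : i = j
      · subst h; rw [Matrix.diagonal_apply_eq]
      · rw [Matrix.diagonal_apply_ne _ h]; exact hσoff i j h
    have hqsum : ∑ k, qc k = 1 := by
      have : σ.trace = ∑ k, qc k := rfl
      rw [← this, hσtr]
    have havg : ∑ m : Fin d, (((d : ℝ)⁻¹ : ℝ) : ℂ) • (Pmat d m * σ * star (Pmat d m))
        = σmix := by
      rw [hσdiag, Finset.sum_congr rfl fun m _ => by rw [Pmat_conj_diag m qc], hmix_diag]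
      ext i j
      rw [Matrix.sum_apply]
      by_cases h : i = j
      · subst h
        rw [Matrix.diagonal_apply_eq]
        have hterm : ∀ m : Fin d, ((((d : ℝ)⁻¹ : ℝ) : ℂ) • diagonal (fun k => qc (k + m))) i i
            = (((d : ℝ)⁻¹ : ℝ) : ℂ) * qc (i + m) := by
          intro m
          rw [Matrix.smul_apply, Matrix.diagonal_apply_eq, smul_eq_mul]
        rw [Finset.sum_congr rfl fun m _ => hterm m, ← Finset.mul_sum]
        have hre : ∑ m : Fin d, qc (i + m) = ∑ k, qc k :=
          Fintype.sum_equiv (Equiv.addLeft i) _ _ (fun m => rfl)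
        rw [hre, hqsum, mul_one]
      · rw [Matrix.diagonal_apply_ne _ h]
        apply Finset.sum_eq_zero
        intro m _
        rw [Matrix.smul_apply, Matrix.diagonal_apply_ne _ h, smul_zero]
    have happ := trace_cfc_convex (w := fun _ : Fin d => (d : ℝ)⁻¹)
      (fun _ => inv_nonneg.mpr hd0.le)
      (by rw [Finset.sum_const, Finset.card_univ, Fintype.card_fin, nsmul_eq_mul]; field_simp)
      (fun m => Aρ * (Pmat d m * σ * star (Pmat d m)) * Aρ)
      (fun m => by
        have h1 : (Pmat d m * σ * star (Pmat d m)).PosSemidef := by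
          have := hσpsd.mul_mul_conjTranspose_same (Pmat d m)
          rwa [← Matrix.star_eq_conjTranspose] at this
        exact hpsdρ _ h1) hf
    have hsum_eq : ∑ m : Fin d, (((d : ℝ)⁻¹ : ℝ) : ℂ)
        • (Aρ * (Pmat d m * σ * star (Pmat d m)) * Aρ) = Aρ * σmix * Aρ := by
      rw [← havg, Finset.mul_sum, Finset.sum_mul]
      refine Finset.sum_congr rfl fun m _ => ?_
      rw [Matrix.mul_smul, Matrix.smul_mul]
    have hinv : ∀ m : Fin d, ((hermCFC (Aρ * (Pmat d m * σ * star (Pmat d m)) * Aρ)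
        (fun x : ℝ => x ^ α)).trace).re = sandwichTr σ ρp α := by
      intro m
      have hPA : Pmat d m * Aρ = Aρ * Pmat d m := by
        rw [hAeq, Pmat_eq hd m, conj_mul_conj hFu, conj_mul_conj hFu,
          diagonal_mul_diagonal, diagonal_mul_diagonal]
        have hcom : (fun i : Fin d => eph d ((i : ℤ) * (m : ℤ))
              * ((p i ^ ((1 - α)/(2*α)) : ℝ) : ℂ))
            = fun i : Fin d => ((p i ^ ((1 - α)/(2*α)) : ℝ) : ℂ)
              * eph d ((i : ℤ) * (m : ℤ)) := by
          funext i
          ring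
        rw [hcom]
      have hPA' : star (Pmat d m) * Aρ = Aρ * star (Pmat d m) := by
        have h0 := congrArg star hPA
        rw [StarMul.star_mul, StarMul.star_mul] at h0
        have hstarA : star Aρ = Aρ := by
          rw [Matrix.star_eq_conjTranspose, hAρH.eq]
        rw [hstarA] at h0
        exact h0.symm
      have hform : Aρ * (Pmat d m * σ * star (Pmat d m)) * Aρ
          = Pmat d m * (Aρ * σ * Aρ) * star (Pmat d m) := by
        calc Aρ * (Pmat d m * σ * star (Pmat d m)) * Aρ
            = (Aρ * Pmat d m) * σ * (star (Pmat d m) * Aρ) := by noncomm_ring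
          _ = (Pmat d m * Aρ) * σ * (Aρ * star (Pmat d m)) := by rw [hPA, hPA']
          _ = Pmat d m * (Aρ * σ * Aρ) * star (Pmat d m) := by noncomm_ring
      rw [hform, hsandρ]
      exact trace_hermCFC_conj (Pmat_unitary hd m) (hpsdρ σ hσpsd).1 _
    calc sandwichTr σmix ρp α
        = ((hermCFC (∑ m : Fin d, (((d : ℝ)⁻¹ : ℝ) : ℂ)
            • (Aρ * (Pmat d m * σ * star (Pmat d m)) * Aρ)) (fun x : ℝ => x ^ α)).trace).re := by
          rw [hsandρ, hsum_eq]
      _ ≤ ∑ m : Fin d, (d : ℝ)⁻¹ * ((hermCFC (Aρ * (Pmat d m * σ * star (Pmat d m)) * Aρ)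
            (fun x : ℝ => x ^ α)).trace).re := happ
      _ = ∑ m : Fin d, (d : ℝ)⁻¹ * sandwichTr σ ρp α := by
          exact Finset.sum_congr rfl fun m _ => by rw [hinv m]
      _ = sandwichTr σ ρp α := by
          rw [Finset.sum_const, Finset.card_univ, Fintype.card_fin, nsmul_eq_mul,
            ← mul_assoc]
          field_simp
  refine ⟨part1, ⟨⟨σmix, hmixinc, part3.symm⟩, ?_⟩, part3⟩
  rintro x ⟨σ, hσinc, rfl⟩
  rw [← part3]
  by_cases hone : α = 1
  · subst hone; simp [renyiRel]
  · have hgt : 0 < α - 1 := sub_pos.mpr (lt_of_le_of_ne hα1 (Ne.symm hone))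
    rw [renyiRel, renyiRel]
    refine mul_le_mul_of_nonneg_left ?_ (inv_nonneg.mpr hgt.le)
    exact Real.log_le_log hTmixpos (lower σ hσinc)

end
end

section
/- Matrix Hölder inequality: for α > 1, β = (α−1)/α ∈ (0,1), a positive semidefinite matrix A and positive semidefinite τ with Tr τ = 1, one has Tr(τ^β A) ≤ (Tr A^α)^{1/α}. -/
open Matrix
open scoped Kronecker ComplexOrder

noncomputable section

lemma mpow_eq {d : ℕ} (M : Matrix (Fin d) (Fin d) ℂ) (hM : M.IsHermitian) (r : ℝ) :
    mpow M r = (hM.eigenvectorUnitary : Matrix (Fin d) (Fin d) ℂ) *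
      diagonal (fun i => ((hM.eigenvalues i ^ r : ℝ) : ℂ)) *
      star (hM.eigenvectorUnitary : Matrix (Fin d) (Fin d) ℂ) := by
  rw [mpow, hermCFC, dif_pos hM, Matrix.IsHermitian.cfc]
  rfl

lemma trace_unitary_conj {d : ℕ} (U : Matrix.unitaryGroup (Fin d) ℂ)
    (D : Matrix (Fin d) (Fin d) ℂ) :
    ((U : Matrix (Fin d) (Fin d) ℂ) * D * star (U : Matrix (Fin d) (Fin d) ℂ)).trace = D.trace := by
  rw [mul_assoc, trace_mul_comm, mul_assoc, mem_unitaryGroup_iff'.mp U.2, mul_one]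

lemma trace_eq_sum_eig {d : ℕ} (M : Matrix (Fin d) (Fin d) ℂ) (hM : M.IsHermitian) :
    M.trace = ∑ i, (hM.eigenvalues i : ℂ) := by
  conv_lhs => rw [hM.spectral_theorem, Unitary.conjStarAlgAut_apply]
  rw [mul_assoc, trace_mul_comm, mul_assoc,
    mem_unitaryGroup_iff'.mp hM.eigenvectorUnitary.2, mul_one, trace_diagonal]
  rfl

/-- Matrix Hölder inequality: for `α > 1`, `β = (α−1)/α`, `A, τ ⪰ 0` with
`Tr τ = 1`, `Tr(τ^β A) ≤ (Tr A^α)^{1/α}`. -/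
theorem stmt7 {d : ℕ} (α : ℝ) (hα : 1 < α) (β : ℝ) (hβ : β = (α - 1) / α)
    (A τ : Matrix (Fin d) (Fin d) ℂ) (hA : A.PosSemidef)
    (hτ : τ.PosSemidef) (hτ1 : τ.trace = 1) :
    ((mpow τ β * A).trace).re ≤ ((mpow A α).trace.re) ^ α⁻¹ := by
  have hτH : τ.IsHermitian := hτ.1
  have hAH : A.IsHermitian := hA.1
  set U : Matrix (Fin d) (Fin d) ℂ := (hτH.eigenvectorUnitary : Matrix (Fin d) (Fin d) ℂ) with hUdef
  set V : Matrix (Fin d) (Fin d) ℂ := (hAH.eigenvectorUnitary : Matrix (Fin d) (Fin d) ℂ) with hVdef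
  set lam : Fin d → ℝ := hτH.eigenvalues with hlamdef
  set mu : Fin d → ℝ := hAH.eigenvalues with hmudef
  set W : Matrix (Fin d) (Fin d) ℂ := star U * V with hWdef
  set w : Fin d → Fin d → ℝ := fun i j => Complex.normSq (W i j) with hwdef
  set b : Fin d → ℝ := fun i => ∑ j, w i j * mu j with hbdef
  have hw0 : ∀ i j, 0 ≤ w i j := fun i j => Complex.normSq_nonneg _
  have hμ0 : ∀ j, 0 ≤ mu j := fun j => hA.eigenvalues_nonneg j
  have hL0 : ∀ i, 0 ≤ lam i := fun i => hτ.eigenvalues_nonneg i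
  have hb0 : ∀ i, 0 ≤ b i := fun i =>
    Finset.sum_nonneg fun j _ => mul_nonneg (hw0 i j) (hμ0 j)
  have hα0 : (0:ℝ) < α := lt_trans one_pos hα
  have hUU : star U * U = 1 := mem_unitaryGroup_iff'.mp hτH.eigenvectorUnitary.2
  have hUU' : U * star U = 1 := mem_unitaryGroup_iff.mp hτH.eigenvectorUnitary.2
  have hVV : star V * V = 1 := mem_unitaryGroup_iff'.mp hAH.eigenvectorUnitary.2
  have hVV' : V * star V = 1 := mem_unitaryGroup_iff.mp hAH.eigenvectorUnitary.2
  have hsW : star W = star V * U := by rw [hWdef, Matrix.star_mul, star_star]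
  have hWW : W * star W = 1 := by
    rw [hsW, hWdef, mul_assoc, ← mul_assoc V, hVV', one_mul, hUU]
  have hWW' : star W * W = 1 := by
    rw [hsW, hWdef, mul_assoc, ← mul_assoc U, hUU', one_mul, hVV]
  have hrow : ∀ i, ∑ j, w i j = 1 := by
    intro i
    have h1 : (W * star W) i i = 1 := by rw [hWW]; simp [Matrix.one_apply]
    have h2 : (W * star W) i i = ∑ j, ((w i j : ℝ) : ℂ) := by
      rw [Matrix.mul_apply]
      refine Finset.sum_congr rfl fun j _ => ?_
      rw [Matrix.star_apply]
      simp [hwdef, Complex.mul_conj]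
    rw [h2] at h1
    exact_mod_cast h1
  have hcol : ∀ j, ∑ i, w i j = 1 := by
    intro j
    have h1 : (star W * W) j j = 1 := by rw [hWW']; simp [Matrix.one_apply]
    have h2 : (star W * W) j j = ∑ i, ((w i j : ℝ) : ℂ) := by
      rw [Matrix.mul_apply]
      refine Finset.sum_congr rfl fun i _ => ?_
      rw [Matrix.star_apply]
      simp [hwdef, mul_comm, Complex.mul_conj]
    rw [h2] at h1
    exact_mod_cast h1
  have hL1 : ∑ i, lam i = 1 := by
    have h1 := (trace_eq_sum_eig τ hτH).symm.trans hτ1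
    exact_mod_cast h1
  -- main trace identity
  have key : ((mpow τ β * A).trace) = ((∑ i, lam i ^ β * b i : ℝ) : ℂ) := by
    rw [mpow_eq τ hτH β]
    conv_lhs => rw [hAH.spectral_theorem, Unitary.conjStarAlgAut_apply]
    rw [mul_assoc (U * diagonal fun i => ((lam i ^ β : ℝ) : ℂ)), trace_mul_comm, ← mul_assoc,
      trace_mul_comm]
    have hBW : star U * (V * diagonal (RCLike.ofReal ∘ mu) * star V) * U
        = W * diagonal (RCLike.ofReal ∘ mu) * star W := by
      rw [hsW, hWdef]
      noncomm_ring
    rw [hBW, Matrix.trace]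
    have hNii : ∀ i, ((W * diagonal (RCLike.ofReal ∘ mu) * star W : Matrix (Fin d) (Fin d) ℂ)) i i
        = ∑ j, ((w i j : ℝ) : ℂ) * ((mu j : ℝ) : ℂ) := by
      intro i
      rw [Matrix.mul_apply]
      refine Finset.sum_congr rfl fun j _ => ?_
      rw [Matrix.mul_diagonal, Matrix.star_apply]
      have hc : W i j * star (W i j) = ((Complex.normSq (W i j) : ℝ) : ℂ) := by
        simp [Complex.mul_conj]
      calc W i j * (RCLike.ofReal ∘ mu) j * star (W i j)
          = (W i j * star (W i j)) * ((mu j : ℝ) : ℂ) := by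
            show W i j * ((mu j : ℝ) : ℂ) * star (W i j) = _
            ring
        _ = _ := by rw [hc]
    simp only [hbdef]
    push_cast
    refine Finset.sum_congr rfl fun i _ => ?_
    rw [Matrix.diag_apply, Matrix.diagonal_mul, hNii, Finset.mul_sum]
  have hre : ((mpow τ β * A).trace).re = ∑ i, lam i ^ β * b i := by
    rw [key, Complex.ofReal_re]
  have hAtr : ((mpow A α).trace).re = ∑ j, mu j ^ α := by
    rw [mpow_eq A hAH α]
    rw [mul_assoc, trace_mul_comm, mul_assoc, hVV, mul_one, trace_diagonal]
    simp
    rfl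
  -- Jensen step
  have hjensen : ∀ i, (b i) ^ α ≤ ∑ j, w i j * mu j ^ α := by
    intro i
    have hcx : ConvexOn ℝ (Set.Ici 0) fun x : ℝ => x ^ α := convexOn_rpow hα.le
    have := hcx.map_sum_le (t := Finset.univ) (p := mu) (fun j _ => hw0 i j) (hrow i)
      (fun j _ => hμ0 j)
    simpa [hbdef, smul_eq_mul] using this
  have hstep2 : ∑ i, b i ^ α ≤ ∑ j, mu j ^ α := by
    calc ∑ i, b i ^ α ≤ ∑ i, ∑ j, w i j * mu j ^ α :=
          Finset.sum_le_sum fun i _ => hjensen i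
      _ = ∑ j, (∑ i, w i j) * mu j ^ α := by
          rw [Finset.sum_comm]
          exact Finset.sum_congr rfl fun j _ => (Finset.sum_mul _ _ _).symm
      _ = ∑ j, mu j ^ α := by
          refine Finset.sum_congr rfl fun j _ => ?_
          rw [hcol j, one_mul]
  -- Hölder step
  have hpq : (α / (α - 1)).HolderConjugate α := (Real.HolderConjugate.conjExponent hα).symm
  have hH := Real.inner_le_Lp_mul_Lq_of_nonneg Finset.univ hpq
    (f := fun i => lam i ^ β) (g := b)
    (fun i _ => Real.rpow_nonneg (hL0 i) β) (fun i _ => hb0 i)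
  have hexp : ∀ i : Fin d, (lam i ^ β) ^ (α / (α - 1)) = lam i := by
    intro i
    rw [← Real.rpow_mul (hL0 i)]
    have : β * (α / (α - 1)) = 1 := by
      have h1 : α - 1 ≠ 0 := sub_ne_zero.mpr (ne_of_gt hα)
      rw [hβ]; field_simp
    rw [this, Real.rpow_one]
  rw [Finset.sum_congr rfl fun i _ => hexp i, hL1, Real.one_rpow, one_mul, one_div] at hH
  calc ((mpow τ β * A).trace).re = ∑ i, lam i ^ β * b i := hre
    _ ≤ (∑ i, b i ^ α) ^ α⁻¹ := hH
    _ ≤ (∑ j, mu j ^ α) ^ α⁻¹ := by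
        refine Real.rpow_le_rpow (Finset.sum_nonneg fun i _ => Real.rpow_nonneg (hb0 i) α)
          hstep2 (inv_nonneg.mpr hα0.le)
    _ = ((mpow A α).trace.re) ^ α⁻¹ := by rw [hAtr]

end
end

section
/- Quantum Pythagorean theorem: let X be a Hermitian matrix and ρ̃₀ a full-rank density matrix on ℂ^d; let E = {ρ̃_t = exp(tX + log ρ̃₀)/Tr exp(tX + log ρ̃₀)} be the exponential family generated by X, and M = {ρ : Tr ρX = Tr ρ̃₀ X} the corresponding mixture family. Then for any density matrix σ ∈ M and any ρ = ρ̃_t ∈ E: D(σ‖ρ) = D(σ‖ρ̃₀) + D(ρ̃₀‖ρ). -/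
open Matrix
open scoped Kronecker ComplexOrder

noncomputable section

/-- Quantum Pythagorean theorem: for `σ` in the mixture family
`{σ : Tr σX = Tr ρ̃₀X}` and `ρ = ρ̃_t` in the exponential family generated by `X` through
`ρ̃₀`, one has `D(σ‖ρ) = D(σ‖ρ̃₀) + D(ρ̃₀‖ρ)`. -/
theorem stmt9 {d : ℕ} (X ρ₀ : Matrix (Fin d) (Fin d) ℂ) (hX : X.IsHermitian)
    (hρ₀ : ρ₀.PosDef) (hρ₀1 : ρ₀.trace = 1) (t : ℝ)
    (ρ : Matrix (Fin d) (Fin d) ℂ)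
    (hρ : ρ = ((mexp ((t : ℂ) • X + mlog ρ₀)).trace)⁻¹ • mexp ((t : ℂ) • X + mlog ρ₀))
    (σ : Matrix (Fin d) (Fin d) ℂ) (hσ : IsDensity σ)
    (hM : (σ * X).trace = (ρ₀ * X).trace) :
    qRelEntropy σ ρ = qRelEntropy σ ρ₀ + qRelEntropy ρ₀ ρ := by
  classical
  have hL0 : ρ₀.IsHermitian := hρ₀.1
  have hmlog₀ : mlog ρ₀ = cfc Real.log ρ₀ := by
    rw [mlog, hermCFC, dif_pos hL0, hL0.cfc_eq]
  have hmlog₀_sa : IsSelfAdjoint (mlog ρ₀) := hmlog₀ ▸ cfc_predicate Real.log ρ₀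
  have hmlog₀_h : (mlog ρ₀).IsHermitian := hmlog₀_sa
  set A : Matrix (Fin d) (Fin d) ℂ := (t : ℂ) • X + mlog ρ₀ with hAdef
  have hA : A.IsHermitian := by
    have h1 : ((t : ℂ) • X).IsHermitian := by
      unfold Matrix.IsHermitian
      rw [conjTranspose_smul, hX]
      norm_num
    exact h1.add hmlog₀_h
  have hmexp : mexp A = cfc Real.exp A := by
    rw [mexp, hermCFC, dif_pos hA, hA.cfc_eq]
  set c : ℝ := ∑ i, Real.exp (hA.eigenvalues i) with hcdef
  have hne : Nonempty (Fin d) := by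
    by_contra h
    rw [not_nonempty_iff] at h
    rw [Matrix.trace] at hρ₀1
    simp at hρ₀1
  have hc : 0 < c :=
    Finset.sum_pos (fun i _ => Real.exp_pos _) Finset.univ_nonempty
  have htr : (mexp A).trace = (c : ℂ) := by
    rw [mexp, hermCFC, dif_pos hA, Matrix.IsHermitian.cfc, Unitary.conjStarAlgAut_apply, Matrix.trace_mul_cycle,
      Unitary.star_mul_self_of_mem (SetLike.coe_mem _), one_mul,
      Matrix.trace_diagonal]
    rw [hcdef, Complex.ofReal_sum]
    simp [Function.comp]
  have hρeq : ρ = cfc (fun x => c⁻¹ * Real.exp x) A := by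
    rw [hρ, htr, hmexp, cfc_const_mul _ _ A (by fun_prop)]
    ext i j
    simp [Matrix.smul_apply, Complex.real_smul]
  have hρherm : ρ.IsHermitian := by
    rw [hρeq]
    exact (cfc_predicate (fun x => c⁻¹ * Real.exp x) A : IsSelfAdjoint _)
  have hg : ContinuousOn Real.log ((fun x => c⁻¹ * Real.exp x) '' spectrum ℝ A) := by
    apply Real.continuousOn_log.mono
    rintro - ⟨x, -, rfl⟩
    simp only [Set.mem_compl_iff, Set.mem_singleton_iff]
    positivity
  have key : mlog ρ = A - (Real.log c) • (1 : Matrix (Fin d) (Fin d) ℂ) := by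
    rw [mlog, hermCFC, dif_pos hρherm, ← hρherm.cfc_eq, hρeq,
      ← cfc_comp Real.log (fun x => c⁻¹ * Real.exp x) A hA.isSelfAdjoint hg (by fun_prop)]
    have hfe : (Real.log ∘ fun x => c⁻¹ * Real.exp x) = fun x => x - Real.log c := by
      funext x
      simp only [Function.comp_apply,
        Real.log_mul (inv_ne_zero hc.ne') (Real.exp_ne_zero x), Real.log_inv, Real.log_exp]
      ring
    rw [hfe, cfc_sub (fun x : ℝ => x) (fun _ => Real.log c) A (by fun_prop) (by fun_prop),
      cfc_id' ℝ A, cfc_const _ _ hA.isSelfAdjoint, Algebra.algebraMap_eq_smul_one]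
  have hΔ : (σ * ((t : ℂ) • X - (Real.log c) • 1)).trace
      = (ρ₀ * ((t : ℂ) • X - (Real.log c) • 1)).trace := by
    simp [mul_sub, Matrix.mul_smul, Matrix.trace_sub, Matrix.trace_smul, hM, hσ.2, hρ₀1]
  have e1 : mlog σ - (A - (Real.log c) • 1)
      = (mlog σ - mlog ρ₀) - ((t : ℂ) • X - (Real.log c) • 1) := by
    rw [hAdef]; abel
  have e2 : mlog ρ₀ - (A - (Real.log c) • 1)
      = -((t : ℂ) • X - (Real.log c) • 1) := by
    rw [hAdef]; abel
  rw [qRelEntropy, qRelEntropy, qRelEntropy, key, e1, e2]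
  simp only [mul_sub, mul_neg, Matrix.trace_sub, Matrix.trace_neg, Complex.sub_re,
    Complex.neg_re]
  have h1 : (σ * ((t : ℂ) • X)).trace = (ρ₀ * ((t : ℂ) • X)).trace := by
    rw [Matrix.mul_smul, Matrix.mul_smul, Matrix.trace_smul, Matrix.trace_smul, hM]
  have h2 : (σ * ((Real.log c) • (1 : Matrix (Fin d) (Fin d) ℂ))).trace
      = (ρ₀ * ((Real.log c) • (1 : Matrix (Fin d) (Fin d) ℂ))).trace := by
    simp [Matrix.mul_smul, Matrix.trace_smul, hσ.2, hρ₀1]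
  rw [h1, h2]
  ring

end
end

section
/- If X₁ and X₂ are entanglement witnesses for ρ₁ and ρ₂ respectively (i.e., Tr σ_j X_j ≥ 0 for all separable σ_j on the respective bipartite systems), then X₁ ⊗ I + I ⊗ X₂ is an entanglement witness for ρ₁ ⊗ ρ₂: Tr σ(X₁⊗I + I⊗X₂) ≥ 0 for every separable state σ on (H_{A1}⊗H_{A2}) ⊗ (H_{B1}⊗H_{B2}). -/
open Matrix
open scoped Kronecker ComplexOrder

noncomputable section

section PTr
set_option linter.unusedSectionVars false
variable {A B : Type*} [Fintype A] [Fintype B] [DecidableEq A] [DecidableEq B]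

def ptrR (M : Matrix (A × B) (A × B) ℂ) : Matrix A A ℂ :=
  Matrix.of fun a a' => ∑ b, M (a, b) (a', b)

lemma ptrR_posSemidef {M : Matrix (A × B) (A × B) ℂ} (hM : M.PosSemidef) :
    (ptrR M).PosSemidef := by
  refine Matrix.posSemidef_iff_dotProduct_mulVec.mpr ⟨?_, ?_⟩
  · ext a a'
    simp only [conjTranspose_apply, ptrR, of_apply, star_sum]
    exact Finset.sum_congr rfl fun b _ => (hM.1.apply (a,b) (a',b))
  · intro v
    have h : star v ⬝ᵥ (ptrR M) *ᵥ v
        = ∑ b, star (fun p : A × B => if p.2 = b then v p.1 else 0) ⬝ᵥ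
            M *ᵥ (fun p : A × B => if p.2 = b then v p.1 else 0) := by
      simp only [dotProduct, mulVec, dotProduct, ptrR, of_apply, Pi.star_apply,
        Fintype.sum_prod_type, mul_ite, ite_mul, zero_mul, mul_zero, apply_ite (star : ℂ → ℂ), star_zero,
        Finset.sum_ite_eq', Finset.mem_univ, if_true, Finset.mul_sum, Finset.sum_mul]
      refine Eq.symm ?_
      refine (Finset.sum_congr rfl fun b _ => Finset.sum_congr rfl fun a1 _ =>
        Finset.sum_comm).trans ?_
      simp only [Finset.sum_ite_eq', Finset.mem_univ, if_true]
      rw [Finset.sum_comm]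
      exact Finset.sum_congr rfl fun a _ => Finset.sum_comm
    rw [h]
    exact Finset.sum_nonneg fun b _ => hM.dotProduct_mulVec_nonneg _


def ptrL (M : Matrix (A × B) (A × B) ℂ) : Matrix B B ℂ :=
  Matrix.of fun b b' => ∑ a, M (a, b) (a, b')

lemma ptrL_eq (M : Matrix (A × B) (A × B) ℂ) :
    ptrL M = ptrR (M.submatrix Prod.swap Prod.swap) := by
  ext b b'
  simp [ptrL, ptrR]

lemma ptrL_posSemidef {M : Matrix (A × B) (A × B) ℂ} (hM : M.PosSemidef) :
    (ptrL M).PosSemidef := by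
  rw [ptrL_eq]; exact ptrR_posSemidef (hM.submatrix _)

lemma ptrR_trace (M : Matrix (A × B) (A × B) ℂ) : (ptrR M).trace = M.trace := by
  simp [ptrR, Matrix.trace, Fintype.sum_prod_type]

lemma ptrL_trace (M : Matrix (A × B) (A × B) ℂ) : (ptrL M).trace = M.trace := by
  rw [ptrL_eq, ptrR_trace]
  exact Fintype.sum_equiv (Equiv.prodComm B A) _ _ fun p => rfl

variable {A₁ B₁ A₂ B₂ : Type*} [Fintype A₁] [Fintype B₁] [Fintype A₂] [Fintype B₂]
  [DecidableEq A₁] [DecidableEq B₁] [DecidableEq A₂] [DecidableEq B₂]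

lemma trace_mul_reindex {C D : Type*} [Fintype C] [Fintype D] [DecidableEq C] [DecidableEq D]
    (e : C ≃ D) (M : Matrix D D ℂ) (N : Matrix C C ℂ) :
    (M * Matrix.reindex e e N).trace = ((Matrix.reindex e.symm e.symm M) * N).trace := by
  simp only [Matrix.trace, Matrix.diag, Matrix.mul_apply, Matrix.reindex_apply,
    Matrix.submatrix_apply, Equiv.symm_symm]
  refine Eq.symm (Fintype.sum_equiv e _ _ fun c => ?_)
  refine Fintype.sum_equiv e _ _ fun c' => ?_
  simp

lemma trace_mul_kron_one {C D : Type*} [Fintype C] [Fintype D] [DecidableEq C] [DecidableEq D]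
    (τ : Matrix (C × D) (C × D) ℂ) (X : Matrix C C ℂ) :
    (τ * (X ⊗ₖ (1 : Matrix D D ℂ))).trace = (ptrR τ * X).trace := by
  simp only [Matrix.trace, Matrix.diag, Matrix.mul_apply, kroneckerMap_apply,
    Matrix.one_apply, ptrR, of_apply, Fintype.sum_prod_type,
    mul_ite, ite_mul, zero_mul, mul_zero, mul_one,
    Finset.sum_ite_eq', Finset.mem_univ, if_true, Finset.sum_mul]
  exact Finset.sum_congr rfl fun x _ => Finset.sum_comm

lemma trace_mul_one_kron {C D : Type*} [Fintype C] [Fintype D] [DecidableEq C] [DecidableEq D]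
    (τ : Matrix (C × D) (C × D) ℂ) (X : Matrix D D ℂ) :
    (τ * ((1 : Matrix C C ℂ) ⊗ₖ X)).trace = (ptrL τ * X).trace := by
  simp only [Matrix.trace, Matrix.diag, Matrix.mul_apply, kroneckerMap_apply,
    Matrix.one_apply, ptrL, of_apply, Fintype.sum_prod_type,
    mul_ite, ite_mul, zero_mul, mul_zero, one_mul,
    Finset.sum_ite_eq', Finset.mem_univ, if_true, Finset.sum_mul]
  refine (Finset.sum_congr rfl fun x _ => Finset.sum_congr rfl fun x1 _ =>
    Finset.sum_comm).trans ?_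
  simp only [Finset.sum_ite_eq', Finset.mem_univ, if_true]
  rw [Finset.sum_comm]
  exact Finset.sum_congr rfl fun x1 _ => Finset.sum_comm

lemma ptrR_reindex (ρA : Matrix (A₁ × A₂) (A₁ × A₂) ℂ) (ρB : Matrix (B₁ × B₂) (B₁ × B₂) ℂ) :
    ptrR (Matrix.reindex (Equiv.prodProdProdComm A₁ B₁ A₂ B₂).symm
      (Equiv.prodProdProdComm A₁ B₁ A₂ B₂).symm (ρA ⊗ₖ ρB)) = ptrR ρA ⊗ₖ ptrR ρB := by
  ext ⟨a1, b1⟩ ⟨a1', b1'⟩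
  simp only [ptrR, of_apply, Matrix.reindex_apply, Matrix.submatrix_apply, Equiv.symm_symm,
    Equiv.prodProdProdComm_apply, kroneckerMap_apply, Fintype.sum_prod_type]
  rw [Finset.sum_mul_sum]

lemma ptrL_reindex (ρA : Matrix (A₁ × A₂) (A₁ × A₂) ℂ) (ρB : Matrix (B₁ × B₂) (B₁ × B₂) ℂ) :
    ptrL (Matrix.reindex (Equiv.prodProdProdComm A₁ B₁ A₂ B₂).symm
      (Equiv.prodProdProdComm A₁ B₁ A₂ B₂).symm (ρA ⊗ₖ ρB)) = ptrL ρA ⊗ₖ ptrL ρB := by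
  ext ⟨a2, b2⟩ ⟨a2', b2'⟩
  simp only [ptrL, of_apply, Matrix.reindex_apply, Matrix.submatrix_apply, Equiv.symm_symm,
    Equiv.prodProdProdComm_apply, kroneckerMap_apply, Fintype.sum_prod_type]
  rw [Finset.sum_mul_sum]

lemma kron1 (ρA : Matrix (A₁ × A₂) (A₁ × A₂) ℂ) (ρB : Matrix (B₁ × B₂) (B₁ × B₂) ℂ)
    (X : Matrix (A₁ × B₁) (A₁ × B₁) ℂ) :
    ((ρA ⊗ₖ ρB) * Matrix.reindex (Equiv.prodProdProdComm A₁ B₁ A₂ B₂)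
      (Equiv.prodProdProdComm A₁ B₁ A₂ B₂)
      (X ⊗ₖ (1 : Matrix (A₂ × B₂) (A₂ × B₂) ℂ))).trace
    = ((ptrR ρA ⊗ₖ ptrR ρB) * X).trace := by
  rw [trace_mul_reindex, trace_mul_kron_one, ptrR_reindex]

lemma kron2 (ρA : Matrix (A₁ × A₂) (A₁ × A₂) ℂ) (ρB : Matrix (B₁ × B₂) (B₁ × B₂) ℂ)
    (X : Matrix (A₂ × B₂) (A₂ × B₂) ℂ) :
    ((ρA ⊗ₖ ρB) * Matrix.reindex (Equiv.prodProdProdComm A₁ B₁ A₂ B₂)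
      (Equiv.prodProdProdComm A₁ B₁ A₂ B₂)
      ((1 : Matrix (A₁ × B₁) (A₁ × B₁) ℂ) ⊗ₖ X)).trace
    = ((ptrL ρA ⊗ₖ ptrL ρB) * X).trace := by
  rw [trace_mul_reindex, trace_mul_one_kron, ptrL_reindex]

end PTr

/-- If `X₁`, `X₂` are entanglement witnesses (nonnegative on separable states)
on their respective bipartite systems, then `X₁ ⊗ I + I ⊗ X₂` is an entanglement witness on
the composite system, with respect to the bipartition `(A₁A₂ : B₁B₂)`. -/
theorem stmt13 {a₁ b₁ a₂ b₂ : ℕ}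
    (X₁ : Matrix (Fin a₁ × Fin b₁) (Fin a₁ × Fin b₁) ℂ)
    (X₂ : Matrix (Fin a₂ × Fin b₂) (Fin a₂ × Fin b₂) ℂ)
    (h₁ : ∀ σ, SepState σ → 0 ≤ ((σ * X₁).trace).re)
    (h₂ : ∀ σ, SepState σ → 0 ≤ ((σ * X₂).trace).re) :
    ∀ σ : Matrix ((Fin a₁ × Fin a₂) × (Fin b₁ × Fin b₂))
        ((Fin a₁ × Fin a₂) × (Fin b₁ × Fin b₂)) ℂ, SepState σ →
      0 ≤ ((σ * Matrix.reindex (Equiv.prodProdProdComm (Fin a₁) (Fin b₁) (Fin a₂) (Fin b₂))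
          (Equiv.prodProdProdComm (Fin a₁) (Fin b₁) (Fin a₂) (Fin b₂))
          (X₁ ⊗ₖ (1 : Matrix (Fin a₂ × Fin b₂) (Fin a₂ × Fin b₂) ℂ) +
            (1 : Matrix (Fin a₁ × Fin b₁) (Fin a₁ × Fin b₁) ℂ) ⊗ₖ X₂)).trace).re := by
  intro σ hsep
  obtain ⟨k, p, ρA, ρB, hp, hps, hdA, hdB, rfl⟩ := hsep
  set e := Equiv.prodProdProdComm (Fin a₁) (Fin b₁) (Fin a₂) (Fin b₂)
  have hW : Matrix.reindex e e
      (X₁ ⊗ₖ (1 : Matrix (Fin a₂ × Fin b₂) (Fin a₂ × Fin b₂) ℂ) +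
        (1 : Matrix (Fin a₁ × Fin b₁) (Fin a₁ × Fin b₁) ℂ) ⊗ₖ X₂)
      = Matrix.reindex e e (X₁ ⊗ₖ (1 : Matrix (Fin a₂ × Fin b₂) (Fin a₂ × Fin b₂) ℂ))
        + Matrix.reindex e e ((1 : Matrix (Fin a₁ × Fin b₁) (Fin a₁ × Fin b₁) ℂ) ⊗ₖ X₂) := by
    ext i j
    simp [Matrix.reindex_apply]
  rw [hW, Finset.sum_mul, Matrix.trace_sum, Complex.re_sum]
  refine Finset.sum_nonneg fun i _ => ?_
  rw [Matrix.smul_mul, Matrix.trace_smul, smul_eq_mul, Complex.re_ofReal_mul]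
  refine mul_nonneg (hp i) ?_
  rw [mul_add, Matrix.trace_add, Complex.add_re, kron1, kron2]
  have h1' : SepState (ptrR (ρA i) ⊗ₖ ptrR (ρB i)) := by
    refine ⟨1, fun _ => 1, fun _ => ptrR (ρA i), fun _ => ptrR (ρB i), fun _ => zero_le_one,
      by simp, fun _ => ⟨ptrR_posSemidef (hdA i).1, by rw [ptrR_trace]; exact (hdA i).2⟩,
      fun _ => ⟨ptrR_posSemidef (hdB i).1, by rw [ptrR_trace]; exact (hdB i).2⟩, by simp⟩
  have h2' : SepState (ptrL (ρA i) ⊗ₖ ptrL (ρB i)) := by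
    refine ⟨1, fun _ => 1, fun _ => ptrL (ρA i), fun _ => ptrL (ρB i), fun _ => zero_le_one,
      by simp, fun _ => ⟨ptrL_posSemidef (hdA i).1, by rw [ptrL_trace]; exact (hdA i).2⟩,
      fun _ => ⟨ptrL_posSemidef (hdB i).1, by rw [ptrL_trace]; exact (hdB i).2⟩, by simp⟩
  exact add_nonneg (h₁ _ h1') (h₂ _ h2')

end
end
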